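/- arXiv:1003.0656 — 5 statements merged into one kernel-verified Lean document; each statement's English description precedes it below -/
import Mathlib

section
/- Let R : ℝ⁶ → ℝ⁶ be a linear involution (R ∘ R = id) that is symplectic for the standard symplectic form ω, i.e. ω(Ru, Rv) = ω(u,v) for all u,v ∈ ℝ⁶. Then there exists an invertible linear map P : ℝ⁶ → ℝ⁶ with PᵀJP = J (a symplectic change of coordinates) such that P⁻¹RP is one of the following four matrices: the identity Id; diag(1,1,1,1,−1,−1); diag(1,1,−1,−1,−1,−1); or −Id. -/
/-!
Since `R` is an involution, `ℝ⁶` is the direct sum of its eigenspaces `V₊` and `V₋`, and since `R`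
preserves `ω` they are `ω`-orthogonal: `ω u v = ω (R u) (R v) = -ω u v` for `u ∈ V₊`, `v ∈ V₋`.
Hence `ω` restricts to a symplectic form on each of them, and Darboux bases of `V₊` and `V₋`
together form a Darboux basis of `ℝ⁶` in which `R` is `diag(1, …, 1, -1, …, -1)` with `2m` ones,
`0 ≤ m ≤ 3`. The matrix `P` whose columns are this basis satisfies `Pᵀ J P = J` and conjugates
`R` to that diagonal matrix.
-/

open Matrix

/-- The standard symplectic matrix on `ℝ⁶`: block-diagonal with three `2×2`
blocks `[[0,1],[-1,0]]`. -/
noncomputable def J6 : Matrix (Fin 6) (Fin 6) ℝ :=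
  !![0,1,0,0,0,0; -1,0,0,0,0,0; 0,0,0,1,0,0; 0,0,-1,0,0,0; 0,0,0,0,0,1; 0,0,0,0,-1,0]

/-- The standard symplectic form on `ℝ⁶`: `ω(u,v) = uᵀ J v`. -/
noncomputable def ω6 (u v : Fin 6 → ℝ) : ℝ := u ⬝ᵥ J6.mulVec v

open Module
open scoped Kronecker

namespace Module.Basis

variable {R M ι κ : Type*} [Ring R] [AddCommGroup M] [Module R M] {p q : Submodule R M}

noncomputable def ofIsCompl (h : IsCompl p q) (bp : Basis ι R p) (bq : Basis κ R q) :
    Basis (ι ⊕ κ) R M :=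
  (bp.prod bq).map (p.prodEquivOfIsCompl q h)

variable (h : IsCompl p q) (bp : Basis ι R p) (bq : Basis κ R q)

@[simp]
theorem ofIsCompl_inl (i : ι) : ofIsCompl h bp bq (.inl i) = bp i := by
  simp [ofIsCompl]

@[simp]
theorem ofIsCompl_inr (i : κ) : ofIsCompl h bp bq (.inr i) = bq i := by
  simp [ofIsCompl]

end Module.Basis

namespace Module.End

variable {K V : Type*} [Field K] [NeZero (2 : K)] [AddCommGroup V] [Module K V]
  {R : Module.End K V}

theorem isCompl_ker_sub_one_ker_add_one (hR : R * R = 1) :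
    IsCompl (LinearMap.ker (R - 1)) (LinearMap.ker (R + 1)) := by
  have hRR (z : V) : R (R z) = z := by simpa using LinearMap.congr_fun hR z
  constructor
  · refine Submodule.disjoint_def.mpr fun x hx hx' => ?_
    simp only [LinearMap.mem_ker, LinearMap.sub_apply, LinearMap.add_apply, one_apply,
      sub_eq_zero] at hx hx'
    have h2x : (2 : K) • x = 0 := by
      rw [two_smul]
      nth_rw 1 [← hx]
      exact hx'
    exact (smul_eq_zero.mp h2x).resolve_left two_ne_zero
  · refine Submodule.codisjoint_iff_exists_add_eq.mpr fun z =>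
      ⟨(2 : K)⁻¹ • (z + R z), (2 : K)⁻¹ • (z - R z), ?_, ?_, ?_⟩
    · simp [hRR, add_comm]
    · simp [hRR]
    · rw [← smul_add, add_add_sub_cancel, ← two_smul K, smul_smul,
        inv_mul_cancel₀ two_ne_zero, one_smul]

end Module.End

namespace LinearMap
namespace BilinForm

variable {K V : Type*} [Field K] [AddCommGroup V] [Module K V]

/-- `b (i, 0), b (i, 1)` is the `i`-th Darboux pair `eᵢ, fᵢ`. -/
def IsSymplecticBasis {ι : Type*} [Fintype ι] [DecidableEq ι] (B : LinearMap.BilinForm K V)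
    (b : Basis (ι × Fin 2) K V) : Prop :=
  BilinForm.toMatrix b B = (1 : Matrix ι ι K) ⊗ₖ !![0, 1; -1, 0]

namespace IsSymplecticBasis

variable {ι κ : Type*} [Fintype ι] [DecidableEq ι] [Fintype κ] [DecidableEq κ]
  {B : LinearMap.BilinForm K V} {b : Basis (ι × Fin 2) K V}

theorem apply (hb : B.IsSymplecticBasis b) (p q : ι × Fin 2) :
    B (b p) (b q) = (if p.1 = q.1 then 1 else 0) * !![(0 : K), 1; -1, 0] p.2 q.2 := by
  rw [← BilinForm.toMatrix_apply b, hb, kronecker_apply, one_apply]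

theorem nondegenerate (hb : B.IsSymplecticBasis b) : B.Nondegenerate := by
  rw [nondegenerate_iff_det_ne_zero b, hb, det_kronecker]
  simp [det_fin_two_of]

theorem reindex (hb : B.IsSymplecticBasis b) (e : ι ≃ κ) :
    B.IsSymplecticBasis (b.reindex (e.prodCongr (Equiv.refl _))) := by
  ext p q
  rw [BilinForm.toMatrix_apply, Basis.reindex_apply, Basis.reindex_apply, hb.apply,
    kronecker_apply, one_apply]
  simp [e.symm_apply_eq]

theorem ofIsCompl (hB : B.IsRefl) {p q : Submodule K V} (h : IsCompl p q)
    (horth : ∀ x ∈ p, ∀ y ∈ q, B x y = 0) {bp : Basis (ι × Fin 2) K p}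
    {bq : Basis (κ × Fin 2) K q} (hp : (B.restrict p).IsSymplecticBasis bp)
    (hq : (B.restrict q).IsSymplecticBasis bq) :
    B.IsSymplecticBasis
      ((Basis.ofIsCompl h bp bq).reindex (Equiv.sumProdDistrib ι κ (Fin 2)).symm) := by
  ext ⟨s | s, a⟩ ⟨t | t, c⟩ <;>
    simp only [BilinForm.toMatrix_apply, Basis.reindex_apply, Equiv.symm_symm,
      Equiv.sumProdDistrib_apply_left, Equiv.sumProdDistrib_apply_right,
      Basis.ofIsCompl_inl, Basis.ofIsCompl_inr, kronecker_apply, one_apply]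
  · simpa using hp.apply (s, a) (t, c)
  · simp [horth _ (bp _).2 _ (bq _).2]
  · simp [hB _ _ (horth _ (bp _).2 _ (bq _).2)]
  · simpa using hq.apply (s, a) (t, c)

end IsSymplecticBasis

variable {B : LinearMap.BilinForm K V}

theorem nondegenerate_restrict_of_codisjoint (hB : B.Nondegenerate) (hB₀ : B.IsRefl)
    {p q : Submodule K V} (h : Codisjoint p q) (horth : ∀ x ∈ p, ∀ y ∈ q, B x y = 0) :
    (B.restrict p).Nondegenerate := by
  refine (IsRefl.nondegenerate_iff_separatingLeft (B := B.restrict p) fun x y => hB₀ x y).mpr ?_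
  rw [separatingLeft_iff_ker_eq_bot, ker_restrict_eq_of_codisjoint h horth, hB.ker_eq_bot,
    Submodule.comap_bot, Submodule.ker_subtype]

theorem exists_apply_eq_one [Nontrivial V] (hB : B.Nondegenerate) : ∃ e f, B e f = 1 := by
  obtain ⟨e, he⟩ := exists_ne (0 : V)
  obtain ⟨f, hf⟩ : ∃ f, B e f ≠ 0 := by
    by_contra! h
    exact he (hB.1 e h)
  exact ⟨e, (B e f)⁻¹ • f, by simp [hf]⟩

theorem exists_isSymplecticBasis_restrict_of_apply_eq_one (hA : B.IsAlt) {e f : V}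
    (hef : B e f = 1) :
    ∃ (W : Submodule K V) (b : Basis (Fin 1 × Fin 2) K W),
      (B.restrict W).IsSymplecticBasis b := by
  have hfe : B f e = -1 := by rw [← LinearMap.IsAlt.neg hA, hef]
  have hli : LinearIndependent K ![e, f] := by
    refine LinearIndependent.pair_iff.mpr fun s t hst => ⟨?_, ?_⟩
    · simpa [hA f, hfe] using congrArg (B f) hst
    · simpa [hA e, hef] using congrArg (B e) hst
  refine ⟨_, (Basis.span hli).reindex (Equiv.uniqueProd (Fin 2) (Fin 1)).symm, ?_⟩
  ext ⟨i, a⟩ ⟨j, c⟩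
  fin_cases i; fin_cases j
  fin_cases a <;> fin_cases c <;> simp [Basis.span_apply, hA e, hA f, hef, hfe]

/-- Darboux: split off the plane spanned by `e, f` with `B e f = 1` and recurse on its
`B`-orthogonal complement. -/
theorem exists_isSymplecticBasis [FiniteDimensional K V] (hA : B.IsAlt) (hB : B.Nondegenerate) :
    ∃ (m : ℕ) (b : Basis (Fin m × Fin 2) K V), B.IsSymplecticBasis b := by
  induction hn : finrank K V using Nat.strong_induction_on generalizing V with
  | _ n ih =>
  rcases subsingleton_or_nontrivial V with hV | hV
  · refine ⟨0, Basis.empty V, ?_⟩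
    ext ⟨i, _⟩
    exact i.elim0
  obtain ⟨e, f, hef⟩ := exists_apply_eq_one hB
  obtain ⟨W, bW, hbW⟩ := exists_isSymplecticBasis_restrict_of_apply_eq_one hA hef
  have hc : IsCompl W (B.orthogonal W) :=
    isCompl_orthogonal_of_restrict_nondegenerate hA.isRefl hbW.nondegenerate
  have horth : ∀ x ∈ W, ∀ y ∈ B.orthogonal W, B x y = 0 := fun x hx y hy => hy x hx
  have hlt : finrank K (B.orthogonal W) < n := by
    have := Submodule.finrank_add_eq_of_isCompl hc
    rw [finrank_eq_card_basis bW, Fintype.card_prod, Fintype.card_fin, Fintype.card_fin] at this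
    omega
  obtain ⟨m, b', hb'⟩ := ih _ hlt (B := B.restrict _) (fun x => hA x)
    (nondegenerate_restrict_of_codisjoint hB hA.isRefl hc.symm.codisjoint
      fun x hx y hy => hA.isRefl _ _ (horth y hy x hx)) rfl
  exact ⟨1 + m, _, (hbW.ofIsCompl hA.isRefl hc horth hb').reindex finSumFinEquiv⟩

theorem apply_eq_zero_of_mem_ker_sub_one_of_mem_ker_add_one [NeZero (2 : K)]
    {R : Module.End K V} (hRB : ∀ u v, B (R u) (R v) = B u v) {x y : V}
    (hx : x ∈ LinearMap.ker (R - 1)) (hy : y ∈ LinearMap.ker (R + 1)) : B x y = 0 := by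
  simp only [LinearMap.mem_ker, LinearMap.sub_apply, LinearMap.add_apply, Module.End.one_apply,
    sub_eq_zero, add_eq_zero_iff_eq_neg] at hx hy
  have := hRB x y
  rw [hx, hy, map_neg] at this
  have h2 : (2 : K) * B x y = 0 := by linear_combination -this
  exact (mul_eq_zero.mp h2).resolve_left two_ne_zero

theorem exists_isSymplecticBasis_of_involutive [FiniteDimensional K V] [NeZero (2 : K)]
    (hA : B.IsAlt) (hB : B.Nondegenerate) {R : Module.End K V} (hR : R * R = 1)
    (hRB : ∀ u v, B (R u) (R v) = B u v) :
    ∃ (m n : ℕ) (b : Basis ((Fin m ⊕ Fin n) × Fin 2) K V), B.IsSymplecticBasis b ∧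
      (∀ i a, R (b (.inl i, a)) = b (.inl i, a)) ∧
      ∀ i a, R (b (.inr i, a)) = -b (.inr i, a) := by
  have hc := Module.End.isCompl_ker_sub_one_ker_add_one hR
  have horth : ∀ x ∈ LinearMap.ker (R - 1), ∀ y ∈ LinearMap.ker (R + 1), B x y = 0 :=
    fun x hx y hy => apply_eq_zero_of_mem_ker_sub_one_of_mem_ker_add_one hRB hx hy
  obtain ⟨m, bp, hbp⟩ := exists_isSymplecticBasis (B := B.restrict _) (fun x => hA x)
    (nondegenerate_restrict_of_codisjoint hB hA.isRefl hc.codisjoint horth)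
  obtain ⟨n, bm, hbm⟩ := exists_isSymplecticBasis (B := B.restrict _) (fun x => hA x)
    (nondegenerate_restrict_of_codisjoint hB hA.isRefl hc.symm.codisjoint
      fun x hx y hy => hA.isRefl _ _ (horth y hy x hx))
  refine ⟨m, n, _, hbp.ofIsCompl hA.isRefl hc horth hbm, fun i a => ?_, fun i a => ?_⟩
  · have := LinearMap.mem_ker.mp (bp (i, a)).2
    rw [LinearMap.sub_apply, Module.End.one_apply, sub_eq_zero] at this
    simpa using this
  · have := LinearMap.mem_ker.mp (bm (i, a)).2
    rw [LinearMap.add_apply, Module.End.one_apply, add_eq_zero_iff_eq_neg] at this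
    simpa using this

end BilinForm
end LinearMap

theorem Matrix.exists_conj_eq_diagonal_of_basis {n K : Type*} [Fintype n] [DecidableEq n]
    [CommRing K] {J R : Matrix n n K} (b : Basis n K (n → K)) {d : n → K}
    (hJ : LinearMap.BilinForm.toMatrix b J.toBilin' = J) (hR : ∀ i, R *ᵥ b i = d i • b i) :
    ∃ P : Matrix n n K, IsUnit P ∧ Pᵀ * J * P = J ∧ P⁻¹ * R * P = diagonal d := by
  let e := Pi.basisFun K n
  have hinv : (e.toMatrix b)⁻¹ = b.toMatrix e :=
    inv_eq_left_inv (b.toMatrix_mul_toMatrix_flip e)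
  refine ⟨e.toMatrix b, @isUnit_of_invertible _ _ _ (e.invertibleToMatrix b), ?_, ?_⟩
  · conv_rhs => rw [← hJ, ← LinearMap.BilinForm.toMatrix_mul_basis_toMatrix e,
      LinearMap.BilinForm.toMatrix_basisFun, LinearMap.BilinForm.toMatrix'_toBilin']
  · have hRe : R = LinearMap.toMatrix e e R.toLin' := by
      rw [LinearMap.toMatrix_eq_toMatrix', LinearMap.toMatrix'_toLin']
    rw [hinv, hRe, basis_toMatrix_mul_linearMap_toMatrix_mul_basis_toMatrix]
    ext i j
    rw [LinearMap.toMatrix_apply, toLin'_apply, hR, map_smul, b.repr_self, diagonal_apply]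
    by_cases h : i = j <;> simp [h]

theorem J6_eq_submatrix_kronecker :
    J6 = ((1 : Matrix (Fin 3) (Fin 3) ℝ) ⊗ₖ !![0, 1; -1, 0]).submatrix
      finProdFinEquiv.symm finProdFinEquiv.symm := by
  ext i j
  fin_cases i <;> fin_cases j <;>
    simp [J6, one_apply, finProdFinEquiv, Fin.divNat, Fin.modNat, Fin.ext_iff]

theorem isAlt_toBilin'_J6 : (toBilin' J6).IsAlt := by
  intro x
  simp [toBilin'_apply', J6, dotProduct, mulVec, Fin.sum_univ_succ]
  ring

theorem nondegenerate_toBilin'_J6 : (toBilin' J6).Nondegenerate := by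
  rw [LinearMap.BilinForm.nondegenerate_toBilin'_iff_det_ne_zero, J6_eq_submatrix_kronecker,
    det_submatrix_equiv_self, det_kronecker]
  simp [det_fin_two_of]

def signVector (m : ℕ) (i : Fin 6) : ℝ := if (i : ℕ) < 2 * m then 1 else -1

theorem diagonal_signVector_eq_or {m : ℕ} (hm : m ≤ 3) :
    diagonal (signVector m) = 1 ∨ diagonal (signVector m) = diagonal ![1, 1, 1, 1, -1, -1] ∨
      diagonal (signVector m) = diagonal ![1, 1, -1, -1, -1, -1] ∨
      diagonal (signVector m) = -1 := by
  rw [← diagonal_one, diagonal_neg]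
  interval_cases m
  · refine .inr <| .inr <| .inr <| congrArg diagonal ?_
    ext i; fin_cases i <;> simp [signVector]
  · refine .inr <| .inr <| .inl <| congrArg diagonal ?_
    ext i; fin_cases i <;> simp [signVector]
  · refine .inr <| .inl <| congrArg diagonal ?_
    ext i; fin_cases i <;> simp [signVector]
  · refine .inl <| congrArg diagonal ?_
    ext i; fin_cases i <;> simp [signVector]

theorem exists_basis_toMatrix_eq_J6_of_involutive {R : Matrix (Fin 6) (Fin 6) ℝ}
    (hinv : R * R = 1) (hsymp : ∀ u v : Fin 6 → ℝ, ω6 (R *ᵥ u) (R *ᵥ v) = ω6 u v) :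
    ∃ (m : ℕ) (b : Basis (Fin 6) ℝ (Fin 6 → ℝ)), m ≤ 3 ∧
      LinearMap.BilinForm.toMatrix b (toBilin' J6) = J6 ∧
      ∀ i, R *ᵥ b i = signVector m i • b i := by
  obtain ⟨m, n, b, hb, hRp, hRm⟩ :=
    LinearMap.BilinForm.exists_isSymplecticBasis_of_involutive isAlt_toBilin'_J6
      nondegenerate_toBilin'_J6 (R := toLin' R)
      (by rw [Module.End.mul_eq_comp, ← toLin'_mul, hinv, toLin'_one]; rfl)
      (fun u v => by simpa only [ω6, toBilin'_apply', toLin'_apply] using hsymp u v)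
  have hmn : m + n = 3 := by
    have := finrank_eq_card_basis b
    simp only [Module.finrank_fin_fun, Fintype.card_prod, Fintype.card_sum,
      Fintype.card_fin] at this
    omega
  let e : Fin m ⊕ Fin n ≃ Fin 3 := finSumFinEquiv.trans (finCongr hmn)
  let f : (Fin m ⊕ Fin n) × Fin 2 ≃ Fin 6 := (e.prodCongr (Equiv.refl _)).trans finProdFinEquiv
  refine ⟨m, b.reindex f, by omega, ?_, ?_⟩
  · ext i j
    conv_rhs => rw [J6_eq_submatrix_kronecker, submatrix_apply, ← hb.reindex e]
    simp only [LinearMap.BilinForm.toMatrix_apply, Basis.reindex_apply]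
    rfl
  · intro i
    obtain ⟨⟨s | s, a⟩, rfl⟩ := f.surjective i
    · have hlt : (f (.inl s, a) : ℕ) < 2 * m := by
        change (a : ℕ) + 2 * s < 2 * m
        omega
      rw [Basis.reindex_apply, f.symm_apply_apply, signVector, if_pos hlt, one_smul,
        ← toLin'_apply, hRp]
    · have hge : ¬(f (.inr s, a) : ℕ) < 2 * m := by
        change ¬(a : ℕ) + 2 * (m + s) < 2 * m
        omega
      rw [Basis.reindex_apply, f.symm_apply_apply, signVector, if_neg hge, neg_one_smul,
        ← toLin'_apply, hRm]

/-- Every linear symplectic involution of `(ℝ⁶, ω)` is symplectically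
conjugate to one of `Id`, `diag(1,1,1,1,-1,-1)`, `diag(1,1,-1,-1,-1,-1)`, `-Id`. -/
theorem normal_form_of_symplectic_involution
    (R : Matrix (Fin 6) (Fin 6) ℝ)
    (hinv : R * R = 1)
    (hsymp : ∀ u v : Fin 6 → ℝ, ω6 (R.mulVec u) (R.mulVec v) = ω6 u v) :
    ∃ P : Matrix (Fin 6) (Fin 6) ℝ, IsUnit P ∧ Pᵀ * J6 * P = J6 ∧
      (P⁻¹ * R * P = 1 ∨
       P⁻¹ * R * P = Matrix.diagonal ![1, 1, 1, 1, -1, -1] ∨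
       P⁻¹ * R * P = Matrix.diagonal ![1, 1, -1, -1, -1, -1] ∨
       P⁻¹ * R * P = -1) := by
  obtain ⟨m, b, hm, hbJ, hbR⟩ := exists_basis_toMatrix_eq_J6_of_involutive hinv hsymp
  obtain ⟨P, hP, hPJ, hPR⟩ := exists_conj_eq_diagonal_of_basis b hbJ hbR
  exact ⟨P, hP, hPJ, hPR ▸ diagonal_signVector_eq_or hm⟩
end

section
/- Let H : ℝ⁴ → ℝ be a smooth function of the coordinates (x₁,y₁,x₂,y₂) satisfying the Birkhoff condition −y₁·∂H/∂x₁ + x₁·∂H/∂y₁ − y₂·∂H/∂x₂ + x₂·∂H/∂y₂ = 0 at every point. Let Ĵ be the 4×4 matrix with rows (0,0,−1,0), (0,0,0,−1), (1,0,0,0), (0,1,0,0), let X_H(z) = Ĵ∇H(z), and let A₀ be the 4×4 matrix with rows (0,1,0,0), (−1,0,0,0), (0,0,0,1), (0,0,−1,0). Then X_H satisfies the Belitskii normal form condition with respect to A₀: A₀ᵀ·X_H(z) = DX_H(z)·(A₀ᵀ z) for all z ∈ ℝ⁴, where DX_H(z) is the Jacobian matrix of X_H at z. -/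
open Matrix

/-- The symplectic structure `Ĵ` on `ℝ⁴` (after the linear change of coordinates). -/
noncomputable def J4hat : Matrix (Fin 4) (Fin 4) ℝ :=
  !![0, 0, -1, 0; 0, 0, 0, -1; 1, 0, 0, 0; 0, 1, 0, 0]

/-- The semisimple linear part `A₀` on `ℝ⁴`. -/
noncomputable def A0 : Matrix (Fin 4) (Fin 4) ℝ :=
  !![0, 1, 0, 0; -1, 0, 0, 0; 0, 0, 0, 1; 0, 0, -1, 0]

/-- The (coordinate) gradient of a function on `ℝᵐ`. -/
noncomputable def grad {m : ℕ} (H : (Fin m → ℝ) → ℝ) (x : Fin m → ℝ) : Fin m → ℝ :=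
  fun i => fderiv ℝ H x (Pi.single i 1)

/-- The Hamiltonian vector field `X_H = Ĵ ∇H` on `ℝ⁴`. -/
noncomputable def XH (H : (Fin 4 → ℝ) → ℝ) (z : Fin 4 → ℝ) : Fin 4 → ℝ :=
  J4hat.mulVec (grad H z)

/-- evaluate a CLM on `Fin 4 → ℝ` via the standard basis -/
lemma eval4 (L : (Fin 4 → ℝ) →L[ℝ] ℝ) (w : Fin 4 → ℝ) :
    L w = w 0 * L (Pi.single 0 1) + w 1 * L (Pi.single 1 1)
        + w 2 * L (Pi.single 2 1) + w 3 * L (Pi.single 3 1) := by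
  have hw : w = w 0 • (Pi.single 0 1 : Fin 4 → ℝ) + w 1 • (Pi.single 1 1 : Fin 4 → ℝ)
      + w 2 • (Pi.single 2 1 : Fin 4 → ℝ) + w 3 • (Pi.single 3 1 : Fin 4 → ℝ) := by
    funext j
    fin_cases j <;> simp [Pi.single_apply]
  conv_lhs => rw [hw]
  simp [smul_eq_mul]

/-- If a smooth Hamiltonian `H` on `ℝ⁴` (coordinates
`(x₁,y₁,x₂,y₂) = (z 0, z 1, z 2, z 3)`) satisfies the Birkhoff condition
`-y₁ H_{x₁} + x₁ H_{y₁} - y₂ H_{x₂} + x₂ H_{y₂} = 0`, then the Hamiltonian vector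
field `X_H = Ĵ∇H` is in Belitskii normal form with respect to `A₀`:
`A₀ᵀ X_H(z) = DX_H(z)(A₀ᵀ z)` for all `z`. -/
theorem birkhoff_implies_belitskii
    (H : (Fin 4 → ℝ) → ℝ) (hH : ContDiff ℝ (⊤ : ℕ∞) H)
    (hBirk : ∀ z : Fin 4 → ℝ,
      -(z 1) * grad H z 0 + z 0 * grad H z 1 - z 3 * grad H z 2 + z 2 * grad H z 3 = 0) :
    ∀ z : Fin 4 → ℝ, A0ᵀ.mulVec (XH H z) = fderiv ℝ (XH H) z (A0ᵀ.mulVec z) := by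
  intro z
  set f' := fderiv ℝ H with hf'def
  have hd1 : Differentiable ℝ H := hH.differentiable (by simp)
  have hH' : ContDiff ℝ (⊤ : ℕ∞) H := hH.of_le (by simp)
  have hH1 : ContDiff ℝ (⊤ : ℕ∞) f' := (contDiff_infty_iff_fderiv.mp hH').2
  have hd2 : Differentiable ℝ f' := hH1.differentiable (by simp)
  set f'' := fun x => fderiv ℝ f' x with hf''def
  have hsymm : ∀ (x v w : Fin 4 → ℝ), f'' x v w = f'' x w v := fun x v w =>
    second_derivative_symmetric (fun y => (hd1 y).hasFDerivAt) ((hd2 x).hasFDerivAt) v w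
  -- derivative of components of the gradient
  have hg : ∀ (i : Fin 4) (x : Fin 4 → ℝ),
      HasFDerivAt (fun y => f' y (Pi.single i 1)) ((f'' x).flip (Pi.single i 1)) x := by
    intro i x
    have h := ((hd2 x).hasFDerivAt).clm_apply
      (hasFDerivAt_const (Pi.single i (1:ℝ) : Fin 4 → ℝ) x)
    simpa using h
  -- differentiated Birkhoff condition
  have key : ∀ (x v : Fin 4 → ℝ),
      -(v 1) * f' x (Pi.single 0 1) - x 1 * f'' x v (Pi.single 0 1)
      + v 0 * f' x (Pi.single 1 1) + x 0 * f'' x v (Pi.single 1 1)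
      - v 3 * f' x (Pi.single 2 1) - x 3 * f'' x v (Pi.single 2 1)
      + v 2 * f' x (Pi.single 3 1) + x 2 * f'' x v (Pi.single 3 1) = 0 := by
    intro x v
    have hc : ∀ i : Fin 4, HasFDerivAt (fun y : Fin 4 → ℝ => y i)
        (ContinuousLinearMap.proj i : (Fin 4 → ℝ) →L[ℝ] ℝ) x := fun i =>
      (ContinuousLinearMap.proj i : (Fin 4 → ℝ) →L[ℝ] ℝ).hasFDerivAt
    have hB : HasFDerivAt (fun y : Fin 4 → ℝ =>
        -(y 1) * f' y (Pi.single 0 1) + y 0 * f' y (Pi.single 1 1)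
        - y 3 * f' y (Pi.single 2 1) + y 2 * f' y (Pi.single 3 1)) _ x :=
      ((((hc 1).neg.mul (hg 0 x)).add ((hc 0).mul (hg 1 x))).sub
        ((hc 3).mul (hg 2 x))).add ((hc 2).mul (hg 3 x))
    have hB0 : HasFDerivAt (fun y : Fin 4 → ℝ =>
        -(y 1) * f' y (Pi.single 0 1) + y 0 * f' y (Pi.single 1 1)
        - y 3 * f' y (Pi.single 2 1) + y 2 * f' y (Pi.single 3 1))
        (0 : (Fin 4 → ℝ) →L[ℝ] ℝ) x := by
      have : (fun y : Fin 4 → ℝ =>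
          -(y 1) * f' y (Pi.single 0 1) + y 0 * f' y (Pi.single 1 1)
          - y 3 * f' y (Pi.single 2 1) + y 2 * f' y (Pi.single 3 1)) = fun _ => (0:ℝ) := by
        funext y
        have := hBirk y
        simpa [grad, hf'def, sub_eq_add_neg] using this
      rw [this]
      exact hasFDerivAt_const 0 x
    have hEq := hB.unique hB0
    have := congrArg (fun (L : (Fin 4 → ℝ) →L[ℝ] ℝ) => L v) hEq
    simp only [ContinuousLinearMap.add_apply, ContinuousLinearMap.sub_apply,
      ContinuousLinearMap.smul_apply, ContinuousLinearMap.flip_apply,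
      ContinuousLinearMap.proj_apply, ContinuousLinearMap.neg_apply,
      ContinuousLinearMap.zero_apply, smul_eq_mul, Pi.neg_apply] at this
    linarith [this]
  -- the direction w = A0ᵀ z
  have hA : A0ᵀ = !![0, -1, 0, 0; 1, 0, 0, 0; 0, 0, 0, -1; 0, 0, 1, 0] := by
    ext i j
    fin_cases i <;> fin_cases j <;> rfl
  set w := A0ᵀ.mulVec z with hwdef
  have hw0 : w 0 = -(z 1) := by simp [hwdef, hA, mulVec, dotProduct, Fin.sum_univ_four]
  have hw1 : w 1 = z 0 := by simp [hwdef, hA, mulVec, dotProduct, Fin.sum_univ_four]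
  have hw2 : w 2 = -(z 3) := by simp [hwdef, hA, mulVec, dotProduct, Fin.sum_univ_four]
  have hw3 : w 3 = z 2 := by simp [hwdef, hA, mulVec, dotProduct, Fin.sum_univ_four]
  -- components of XH
  have hXc : ∀ i : Fin 4, DifferentiableAt ℝ (fun y => XH H y i) z := by
    intro i
    have : (fun y => XH H y i) = fun y =>
        J4hat i 0 * f' y (Pi.single 0 1) + J4hat i 1 * f' y (Pi.single 1 1)
        + J4hat i 2 * f' y (Pi.single 2 1) + J4hat i 3 * f' y (Pi.single 3 1) := by
      funext y
      simp [XH, mulVec, dotProduct, Fin.sum_univ_four, grad, hf'def]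
    rw [this]
    exact ((((differentiableAt_const _).mul (hg 0 z).differentiableAt).add
      ((differentiableAt_const _).mul (hg 1 z).differentiableAt)).add
      ((differentiableAt_const _).mul (hg 2 z).differentiableAt)).add
      ((differentiableAt_const _).mul (hg 3 z).differentiableAt)
  have hpi : fderiv ℝ (XH H) z = ContinuousLinearMap.pi (fun i => fderiv ℝ (fun y => XH H y i) z) := by
    have : XH H = fun y i => XH H y i := rfl
    rw [this, fderiv_pi hXc]
  -- compute the four component functions
  have comp0 : (fun y => XH H y 0) = fun y => -(f' y (Pi.single 2 1)) := by
    funext y; simp [XH, J4hat, mulVec, dotProduct, Fin.sum_univ_four, grad, hf'def]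
  have comp1 : (fun y => XH H y 1) = fun y => -(f' y (Pi.single 3 1)) := by
    funext y; simp [XH, J4hat, mulVec, dotProduct, Fin.sum_univ_four, grad, hf'def]
  have comp2 : (fun y => XH H y 2) = fun y => f' y (Pi.single 0 1) := by
    funext y; simp [XH, J4hat, mulVec, dotProduct, Fin.sum_univ_four, grad, hf'def]
  have comp3 : (fun y => XH H y 3) = fun y => f' y (Pi.single 1 1) := by
    funext y; simp [XH, J4hat, mulVec, dotProduct, Fin.sum_univ_four, grad, hf'def]
  have hd0 : fderiv ℝ (fun y => XH H y 0) z w = -(f'' z w (Pi.single 2 1)) := by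
    rw [comp0, show (fun y => -(f' y (Pi.single 2 1))) = -(fun y => f' y (Pi.single 2 1)) from rfl, (hg 2 z).neg.fderiv]; simp
  have hd1' : fderiv ℝ (fun y => XH H y 1) z w = -(f'' z w (Pi.single 3 1)) := by
    rw [comp1, show (fun y => -(f' y (Pi.single 3 1))) = -(fun y => f' y (Pi.single 3 1)) from rfl, (hg 3 z).neg.fderiv]; simp
  have hd2' : fderiv ℝ (fun y => XH H y 2) z w = f'' z w (Pi.single 0 1) := by
    rw [comp2, (hg 0 z).fderiv]; simp
  have hd3' : fderiv ℝ (fun y => XH H y 3) z w = f'' z w (Pi.single 1 1) := by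
    rw [comp3, (hg 1 z).fderiv]; simp
  have X0 := congrFun comp0 z
  have X1 := congrFun comp1 z
  have X2 := congrFun comp2 z
  have X3 := congrFun comp3 z
  have main : ∀ j : Fin 4, A0ᵀ.mulVec (XH H z) j = fderiv ℝ (fun y => XH H y j) z w := by
    intro j
    fin_cases j
    · show A0ᵀ.mulVec (XH H z) 0 = fderiv ℝ (fun y => XH H y 0) z w
      have hl : A0ᵀ.mulVec (XH H z) 0 = f' z (Pi.single 3 1) := by
        simp [hA, A0, mulVec, dotProduct, Fin.sum_univ_four, X0, X1, X2, X3, Matrix.vecHead, Matrix.vecTail]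
      rw [hl, hd0, hsymm z w (Pi.single 2 1), eval4 (f'' z (Pi.single 2 1)) w,
        hw0, hw1, hw2, hw3]
      have := key z (Pi.single 2 1)
      simp +decide [Pi.single_apply] at this
      linear_combination this
    · show A0ᵀ.mulVec (XH H z) 1 = fderiv ℝ (fun y => XH H y 1) z w
      have hl : A0ᵀ.mulVec (XH H z) 1 = -(f' z (Pi.single 2 1)) := by
        simp [hA, A0, mulVec, dotProduct, Fin.sum_univ_four, X0, X1, X2, X3, Matrix.vecHead, Matrix.vecTail]
      rw [hl, hd1', hsymm z w (Pi.single 3 1), eval4 (f'' z (Pi.single 3 1)) w,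
        hw0, hw1, hw2, hw3]
      have := key z (Pi.single 3 1)
      simp +decide [Pi.single_apply] at this
      linear_combination this
    · show A0ᵀ.mulVec (XH H z) 2 = fderiv ℝ (fun y => XH H y 2) z w
      have hl : A0ᵀ.mulVec (XH H z) 2 = -(f' z (Pi.single 1 1)) := by
        simp [hA, A0, mulVec, dotProduct, Fin.sum_univ_four, X0, X1, X2, X3, Matrix.vecHead, Matrix.vecTail]
      rw [hl, hd2', hsymm z w (Pi.single 0 1), eval4 (f'' z (Pi.single 0 1)) w,
        hw0, hw1, hw2, hw3]
      have := key z (Pi.single 0 1)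
      simp +decide [Pi.single_apply] at this
      linear_combination -this
    · show A0ᵀ.mulVec (XH H z) 3 = fderiv ℝ (fun y => XH H y 3) z w
      have hl : A0ᵀ.mulVec (XH H z) 3 = f' z (Pi.single 0 1) := by
        simp [hA, A0, mulVec, dotProduct, Fin.sum_univ_four, X0, X1, X2, X3, Matrix.vecHead, Matrix.vecTail]
      rw [hl, hd3', hsymm z w (Pi.single 1 1), eval4 (f'' z (Pi.single 1 1)) w,
        hw0, hw1, hw2, hw3]
      have := key z (Pi.single 1 1)
      simp +decide [Pi.single_apply] at this
      linear_combination -this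
  funext i
  rw [hpi]
  simp only [ContinuousLinearMap.pi_apply]
  exact main i
end

section
/- Let H₁, H₂ : ℝ² → ℝ be real-analytic functions such that y₂·H₁(y₁,y₂) = y₁·H₂(y₁,y₂) for all (y₁,y₂) ∈ ℝ². Then there exists a real-analytic function H̃ : ℝ² → ℝ such that H₁(y₁,y₂) = y₁·H̃(y₁,y₂) and H₂(y₁,y₂) = y₂·H̃(y₁,y₂) for all (y₁,y₂) ∈ ℝ². -/
/-!
Near the origin write `H₁ y = ∑ pₙ (y, …, y)`. Since `H₁` vanishes on the axis `y₁ = 0` (by the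
relation and continuity), `H₁ y = ∑ (pₙ₊₁ (y, …, y) - pₙ₊₁ ((0, y₂), …, (0, y₂)))`, and
telescoping each `pₙ₊₁` one slot at a time writes the `n`-th term as `y₁ qₙ (y, …, y)` with
`‖qₙ‖ ≤ (n + 1) ‖pₙ₊₁‖`. So `S = ∑ qₙ` is analytic near `0` and `H₁ = y₁ S` there. Away from the
origin the common factor is `H₁ / y₁` or `H₂ / y₂`, which agree by the relation; near the origin it
is `S`, because `H₂ = y₂ S` there too, first off the axis and then by continuity.
-/

open scoped NNReal Topology

noncomputable section
variable {𝕜 E F : Type*} [NontriviallyNormedField 𝕜] [NormedAddCommGroup E] [NormedSpace 𝕜 E]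
  [NormedAddCommGroup F] [NormedSpace 𝕜 F]

namespace ContinuousMultilinearMap

variable {n : ℕ}

/-- The `i`-th summand puts `(1, 0)` in slot `i`, the argument in the slots before it and the
argument's projection `(0, ·)` in the slots after it: these are the terms of the telescoping sum
from `m (x, …, x)` to `m ((0, x.2), …, (0, x.2))`. -/
def divFst (m : ContinuousMultilinearMap 𝕜 (fun _ : Fin (n + 1) => 𝕜 × E) F) :
    ContinuousMultilinearMap 𝕜 (fun _ : Fin n => 𝕜 × E) F :=
  ∑ i, (m.curryMid i (1, 0)).compContinuousLinearMap fun j =>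
    if j.castSucc < i then .id 𝕜 (𝕜 × E) else (0 : 𝕜 →L[𝕜] 𝕜).prodMap (.id 𝕜 E)

theorem sub_eq_fst_smul_divFst
    (m : ContinuousMultilinearMap 𝕜 (fun _ : Fin (n + 1) => 𝕜 × E) F) (x : 𝕜 × E) :
    m (fun _ => x) - m (fun _ => (0, x.2)) = x.1 • m.divFst (fun _ => x) := by
  have h := m.toMultilinearMap.map_sub_map_piecewise (fun _ => x) (fun _ => (0, x.2)) .univ
  simp only [Finset.piecewise_univ, Finset.mem_univ, true_imp_iff, coe_coe] at h
  rw [h, divFst, sum_apply, Finset.smul_sum]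
  refine Finset.sum_congr rfl fun i _ => ?_
  rw [compContinuousLinearMap_apply, curryMid_apply, ← coe_coe,
    ← MultilinearMap.map_insertNth_smul]
  congr 1
  refine (Fin.insertNth_eq_iff.2 ⟨?_, funext fun j => ?_⟩).symm
  · ext <;> simp
  · simp only [Fin.removeNth_apply, Fin.succAbove_lt_iff_castSucc_lt,
      if_neg (Fin.succAbove_ne i j).symm]
    split_ifs <;> rfl

theorem norm_divFst_le (m : ContinuousMultilinearMap 𝕜 (fun _ : Fin (n + 1) => 𝕜 × E) F) :
    ‖m.divFst‖ ≤ (n + 1) * ‖m‖ := by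
  calc ‖m.divFst‖ ≤ ∑ _i : Fin (n + 1), ‖m‖ :=
        (norm_sum_le _ _).trans (Finset.sum_le_sum fun i _ => ?_)
    _ = (n + 1) * ‖m‖ := by simp
  refine (norm_compContinuousLinearMap_le _ _).trans ?_
  rw [← mul_one ‖m‖]
  gcongr
  · refine ((m.curryMid i).le_opNorm _).trans ?_
    simp [norm_curryMid, Prod.norm_def]
  · refine Finset.prod_le_one (fun _ _ => norm_nonneg _) fun j _ => ?_
    split_ifs
    · exact ContinuousLinearMap.norm_id_le
    · exact ContinuousLinearMap.opNorm_le_bound _ zero_le_one fun x => by simp [Prod.norm_def]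

end ContinuousMultilinearMap

namespace FormalMultilinearSeries

theorem radius_pos_of_norm_le_succ_mul {E' F' : Type*} [NormedAddCommGroup E']
    [NormedSpace 𝕜 E'] [NormedAddCommGroup F'] [NormedSpace 𝕜 F']
    {p : FormalMultilinearSeries 𝕜 E F}
    {q : FormalMultilinearSeries 𝕜 E' F'} (hp : 0 < p.radius)
    (hq : ∀ n, ‖q n‖ ≤ (n + 1) * ‖p (n + 1)‖) : 0 < q.radius := by
  obtain ⟨r, hr0, hr⟩ := ENNReal.lt_iff_exists_nnreal_btwn.1 hp
  have hr_pos : (0 : ℝ) < r := by exact_mod_cast hr0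
  obtain ⟨C, -, hC⟩ := p.norm_mul_pow_le_of_lt_radius hr
  refine lt_of_lt_of_le ?_ (q.le_radius_of_bound (C / r) (r := r / 2) fun n => ?_)
  · simpa using hr0.ne'
  · have h2n : (n : ℝ) + 1 ≤ 2 ^ n := by exact_mod_cast Nat.lt_two_pow_self
    calc ‖q n‖ * ((r / 2 : ℝ≥0) : ℝ) ^ n ≤ 2 ^ n * ‖p (n + 1)‖ * (r / 2) ^ n := by
          push_cast; gcongr; exact (hq n).trans (by gcongr)
      _ = ‖p (n + 1)‖ * r ^ (n + 1) / r := by rw [div_pow, pow_succ]; field_simp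
      _ ≤ C / r := by gcongr; exact hC (n + 1)

def divFst (p : FormalMultilinearSeries 𝕜 (𝕜 × E) F) :
    FormalMultilinearSeries 𝕜 (𝕜 × E) F := fun n => (p (n + 1)).divFst

theorem radius_divFst_pos {p : FormalMultilinearSeries 𝕜 (𝕜 × E) F} (hp : 0 < p.radius) :
    0 < p.divFst.radius :=
  radius_pos_of_norm_le_succ_mul hp fun n => (p (n + 1)).norm_divFst_le

end FormalMultilinearSeries

theorem AnalyticAt.exists_eventually_eq_fst_smul [CompleteSpace F] {f : 𝕜 × E → F}
    (hf : AnalyticAt 𝕜 f 0) (hf0 : ∀ y, f (0, y) = 0) :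
    ∃ g : 𝕜 × E → F, AnalyticAt 𝕜 g 0 ∧ ∀ᶠ x in 𝓝 0, f x = x.1 • g x := by
  obtain ⟨p, r, hp⟩ := hf
  have hq := FormalMultilinearSeries.radius_divFst_pos hp.radius_pos
  refine ⟨p.divFst.sum, (p.divFst.hasFPowerSeriesOnBall hq).analyticAt, ?_⟩
  filter_upwards [Metric.eball_mem_nhds 0 hp.r_pos, Metric.eball_mem_nhds 0 hq] with x hxp hxq
  have hpx : ((0 : 𝕜), x.2) ∈ Metric.eball (0 : 𝕜 × E) r := by
    rw [Metric.mem_eball, edist_zero_right] at hxp ⊢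
    refine lt_of_le_of_lt ?_ hxp
    exact enorm_le_iff_norm_le.2 (by simp [Prod.norm_def])
  have hsum := (hp.hasSum hxp).sub (hp.hasSum hpx)
  rw [zero_add, zero_add, hf0, sub_zero, ← hasSum_nat_add_iff' 1] at hsum
  have h0 : p 0 (fun _ => x) = p 0 (fun _ => ((0 : 𝕜), x.2)) :=
    congr_arg (p 0) (Subsingleton.elim _ _)
  simp only [Finset.range_one, Finset.sum_singleton, h0, sub_self, sub_zero,
    ContinuousMultilinearMap.sub_eq_fst_smul_divFst] at hsum
  exact hsum.unique ((p.divFst.hasSum hxq).const_smul x.1)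

end

section CommonFactor

variable {𝕜 : Type*} [NontriviallyNormedField 𝕜]

theorem eq_zero_of_forall_mul_eq_zero {f : 𝕜 → 𝕜} (hf : Continuous f) (h : ∀ t, t * f t = 0)
    (t : 𝕜) : f t = 0 :=
  congr_fun (Continuous.ext_on (dense_compl_singleton 0) hf continuous_const
    fun s hs => (mul_eq_zero.1 (h s)).resolve_left hs) t

theorem Prod.eq_of_fst_mul_eq_of_snd_mul_eq {M₀ : Type*} [MonoidWithZero M₀]
    [IsLeftCancelMulZero M₀] {y : M₀ × M₀} (hy : y ≠ 0) {a b : M₀} (h₁ : y.1 * a = y.1 * b)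
    (h₂ : y.2 * a = y.2 * b) : a = b := by
  by_cases hy₁ : y.1 = 0
  · exact mul_left_cancel₀ (fun hy₂ => hy (Prod.ext hy₁ hy₂)) h₂
  · exact mul_left_cancel₀ hy₁ h₁

theorem exists_eq_fst_mul_and_eq_snd_mul {K : Type*} [Field K] {H₁ H₂ : K × K → K}
    (hrel : ∀ p : K × K, p.2 * H₁ p = p.1 * H₂ p) (hH₁ : ∀ b, H₁ (0, b) = 0)
    (hH₂ : ∀ a, H₂ (a, 0) = 0) (c : K) :
    ∃ T : K × K → K, T 0 = c ∧ ∀ p : K × K, H₁ p = p.1 * T p ∧ H₂ p = p.2 * T p := by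
  classical
  refine ⟨fun p => if p.1 ≠ 0 then H₁ p / p.1 else if p.2 ≠ 0 then H₂ p / p.2 else c,
    by simp, fun ⟨a, b⟩ => ?_⟩
  rcases eq_or_ne a 0 with rfl | ha
  · rcases eq_or_ne b 0 with rfl | hb
    · simp [hH₁, hH₂]
    · simp [hb, hH₁, mul_div_cancel₀]
  · simp only [ne_eq, ha, not_false_eq_true, if_true]
    refine ⟨(mul_div_cancel₀ _ ha).symm, ?_⟩
    rw [mul_div_assoc', eq_div_iff ha]
    linear_combination -hrel (a, b)

theorem analyticAt_of_eq_fst_mul_and_eq_snd_mul {H₁ H₂ T : 𝕜 × 𝕜 → 𝕜}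
    (hT : ∀ p : 𝕜 × 𝕜, H₁ p = p.1 * T p ∧ H₂ p = p.2 * T p) {y : 𝕜 × 𝕜} (hy : y ≠ 0)
    (h₁ : AnalyticAt 𝕜 H₁ y) (h₂ : AnalyticAt 𝕜 H₂ y) : AnalyticAt 𝕜 T y := by
  obtain hy₁ | hy₂ : y.1 ≠ 0 ∨ y.2 ≠ 0 := by contrapose! hy; exact Prod.ext hy.1 hy.2
  · refine (h₁.div analyticAt_fst hy₁).congr ?_
    filter_upwards [continuousAt_fst.eventually_ne hy₁] with p hp
    rw [Pi.div_apply, (hT p).1, mul_div_cancel_left₀ _ hp]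
  · refine (h₂.div analyticAt_snd hy₂).congr ?_
    filter_upwards [continuousAt_snd.eventually_ne hy₂] with p hp
    rw [Pi.div_apply, (hT p).2, mul_div_cancel_left₀ _ hp]

theorem eq_snd_mul_of_eq_fst_mul {H₁ H₂ S : 𝕜 × 𝕜 → 𝕜} {U : Set (𝕜 × 𝕜)} (hU : IsOpen U)
    (hrel : ∀ p : 𝕜 × 𝕜, p.2 * H₁ p = p.1 * H₂ p) (hH₂ : ContinuousOn H₂ U)
    (hS : ContinuousOn S U) (hH₁S : ∀ p ∈ U, H₁ p = p.1 * S p) :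
    ∀ p ∈ U, H₂ p = p.2 * S p := by
  have off_axis : ∀ p ∈ U, p.1 ≠ 0 → H₂ p = p.2 * S p := fun p hp hp₁ =>
    mul_left_cancel₀ hp₁ (by rw [← hrel, hH₁S p hp]; ring)
  rintro ⟨a, b⟩ hab
  rcases ne_or_eq a 0 with ha | rfl
  · exact off_axis _ hab ha
  have hline : Continuous fun t : 𝕜 => (t, b) := by fun_prop
  have hU₀ : U ∈ 𝓝 ((0 : 𝕜), b) := hU.mem_nhds hab
  have hf : ContinuousAt (fun t => H₂ (t, b)) 0 :=
    (hH₂.continuousAt hU₀).comp (f := fun t : 𝕜 => (t, b)) hline.continuousAt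
  have hg : ContinuousAt (fun t => b * S (t, b)) 0 :=
    continuousAt_const.mul
      ((hS.continuousAt hU₀).comp (f := fun t : 𝕜 => (t, b)) hline.continuousAt)
  refine ((hf.eventuallyEq_nhds_iff_eventuallyEq_nhdsNE hg).1 ?_).eq_of_nhds
  filter_upwards [nhdsWithin_le_nhds (hline.continuousAt.preimage_mem_nhds hU₀),
    self_mem_nhdsWithin] with t ht ht₀
  exact off_axis _ ht ht₀

end CommonFactor

/-- If `H₁, H₂ : ℝ² → ℝ` are real-analytic and
`y₂ H₁(y₁,y₂) = y₁ H₂(y₁,y₂)` everywhere, then there is a real-analytic `H̃` with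
`H₁ = y₁ H̃` and `H₂ = y₂ H̃`. -/
theorem analytic_common_factor
    (H₁ H₂ : ℝ × ℝ → ℝ)
    (h₁ : ∀ p : ℝ × ℝ, AnalyticAt ℝ H₁ p)
    (h₂ : ∀ p : ℝ × ℝ, AnalyticAt ℝ H₂ p)
    (hrel : ∀ p : ℝ × ℝ, p.2 * H₁ p = p.1 * H₂ p) :
    ∃ Htilde : ℝ × ℝ → ℝ, (∀ p : ℝ × ℝ, AnalyticAt ℝ Htilde p) ∧
      ∀ p : ℝ × ℝ, H₁ p = p.1 * Htilde p ∧ H₂ p = p.2 * Htilde p := by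
  have hc₁ : Continuous H₁ := continuous_iff_continuousAt.2 fun p => (h₁ p).continuousAt
  have hc₂ : Continuous H₂ := continuous_iff_continuousAt.2 fun p => (h₂ p).continuousAt
  have hH₁ : ∀ b, H₁ (0, b) = 0 :=
    eq_zero_of_forall_mul_eq_zero (by fun_prop) fun b => by simpa using hrel (0, b)
  have hH₂ : ∀ a, H₂ (a, 0) = 0 :=
    eq_zero_of_forall_mul_eq_zero (by fun_prop) fun a => by simpa using (hrel (a, 0)).symm
  obtain ⟨S, hS, hH₁S⟩ := (h₁ 0).exists_eventually_eq_fst_smul hH₁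
  obtain ⟨U, hUS, hU, hU₀⟩ := eventually_nhds_iff.1 (hS.eventually_analyticAt.and hH₁S)
  have hH₂S := eq_snd_mul_of_eq_fst_mul hU hrel hc₂.continuousOn
    (fun p hp => (hUS p hp).1.continuousAt.continuousWithinAt) fun p hp => (hUS p hp).2
  obtain ⟨T, hT₀, hT⟩ := exists_eq_fst_mul_and_eq_snd_mul hrel hH₁ hH₂ (S 0)
  refine ⟨T, fun y => ?_, hT⟩
  rcases eq_or_ne y 0 with rfl | hy
  · refine hS.congr ?_
    filter_upwards [hU.mem_nhds hU₀] with p hp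
    rcases eq_or_ne p 0 with rfl | hp₀
    · exact hT₀.symm
    · exact Prod.eq_of_fst_mul_eq_of_snd_mul_eq hp₀ ((hUS p hp).2.symm.trans (hT p).1)
        ((hH₂S p hp).symm.trans (hT p).2)
  · exact analyticAt_of_eq_fst_mul_and_eq_snd_mul hT hy (h₁ y) (h₂ y)
end

section
/- Let f : ℝ × ℝ → ℝ, (y,σ) ↦ f(y,σ), be a smooth function with f(0,0) = 0, ∂f/∂y(0,0) = 0, ∂f/∂σ(0,0) = 1, and ∂²f/∂y²(0,0) = −2a for some a > 0. Then there exist ε > 0 and continuous functions y₊, y₋ : [0,ε) → ℝ with y₊(0) = y₋(0) = 0 such that f(y₊(σ),σ) = 0 and f(y₋(σ),σ) = 0 for all σ ∈ [0,ε), y₊(σ) > 0 > y₋(σ) for σ ∈ (0,ε), and y±(σ)/√(σ/a) → ±1 as σ → 0⁺. In particular the equation f(y,σ) = 0 has, for each small σ > 0, two nonzero solution branches y = ±√(σ/a) + o(√σ) terminating at the origin as σ → 0. -/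
open Filter Set

lemma branch_lemma (φ : ℝ → ℝ) (δ a : ℝ) (hδ : 0 < δ) (ha : 0 < a)
    (hmono : StrictMonoOn φ (Icc 0 δ)) (hcont : ContinuousOn φ (Icc 0 δ))
    (hφ0 : φ 0 = 0)
    (hlim : Tendsto (fun y => φ y / y ^ 2) (nhdsWithin 0 (Ioi 0)) (nhds a)) :
    ∃ ε > (0:ℝ), ∃ u : ℝ → ℝ, Continuous u ∧ u 0 = 0 ∧
      (∀ σ ∈ Ico (0:ℝ) ε, u σ ∈ Icc 0 δ ∧ φ (u σ) = σ) ∧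
      (∀ σ : ℝ, 0 < σ → 0 < u σ) ∧
      Tendsto (fun σ => u σ / Real.sqrt (σ / a)) (nhdsWithin 0 (Ioi 0)) (nhds 1) := by
  have hφδ : 0 < φ δ := by
    have := hmono (left_mem_Icc.2 hδ.le) (right_mem_Icc.2 hδ.le) hδ
    rwa [hφ0] at this
  have φnonneg : ∀ y ∈ Icc (0:ℝ) δ, 0 ≤ φ y := by
    intro y hy
    rcases eq_or_lt_of_le hy.1 with h | h
    · rw [← h, hφ0]
    · exact (hφ0 ▸ hmono (left_mem_Icc.2 hδ.le) hy h).le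
  set Φ : ℝ → ℝ := fun y => if y < 0 then y else if y ≤ δ then φ y else φ δ + (y - δ) with hΦdef
  have hΦ_eq : ∀ y ∈ Icc (0:ℝ) δ, Φ y = φ y := fun y hy => by
    simp only [Φ, if_neg (not_lt.2 hy.1), if_pos hy.2]
  have hΦmono : StrictMono Φ := by
    intro x y hxy
    rcases lt_or_ge x 0 with hx | hx
    · rw [show Φ x = x from if_pos hx]
      rcases lt_or_ge y 0 with hy | hy
      · rw [show Φ y = y from if_pos hy]; exact hxy
      · have : (0:ℝ) ≤ Φ y := by
          rcases le_or_gt y δ with h | h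
          · rw [hΦ_eq y ⟨hy, h⟩]; exact φnonneg y ⟨hy, h⟩
          · simp only [Φ, if_neg (not_lt.2 hy), if_neg (not_le.2 h)]
            have : (0:ℝ) < y - δ := by linarith
            linarith
        linarith
    · have hy0 : (0:ℝ) ≤ y := hx.trans hxy.le
      rcases le_or_gt x δ with hxd | hxd
      · rw [hΦ_eq x ⟨hx, hxd⟩]
        rcases le_or_gt y δ with hyd | hyd
        · rw [hΦ_eq y ⟨hy0, hyd⟩]; exact hmono ⟨hx, hxd⟩ ⟨hy0, hyd⟩ hxy
        · have h1 : φ x ≤ φ δ :=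
            hmono.monotoneOn ⟨hx, hxd⟩ (right_mem_Icc.2 hδ.le) hxd
          simp only [Φ, if_neg (not_lt.2 hy0), if_neg (not_le.2 hyd)]
          linarith
      · have hyd : ¬ y ≤ δ := not_le.2 (hxd.trans hxy)
        simp only [Φ, if_neg (not_lt.2 hx), if_neg (not_le.2 hxd), if_neg (not_lt.2 hy0),
          if_neg hyd]
        linarith
  have hΦsurj : Function.Surjective Φ := by
    intro σ
    rcases lt_or_ge σ 0 with h | h
    · exact ⟨σ, if_pos h⟩
    rcases le_or_gt σ (φ δ) with h2 | h2
    · have : σ ∈ φ '' Icc 0 δ := by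
        apply intermediate_value_Icc hδ.le hcont
        rw [hφ0]; exact ⟨h, h2⟩
      obtain ⟨y, hy, hyσ⟩ := this
      exact ⟨y, by rw [hΦ_eq y hy, hyσ]⟩
    · refine ⟨δ + (σ - φ δ), ?_⟩
      have h1 : ¬ (δ + (σ - φ δ) < 0) := by push_neg; nlinarith
      have h2' : ¬ (δ + (σ - φ δ) ≤ δ) := by push_neg; nlinarith
      simp only [Φ, if_neg h1, if_neg h2']; ring
  set iso := StrictMono.orderIsoOfSurjective Φ hΦmono hΦsurj with hisodef
  set u : ℝ → ℝ := fun σ => iso.symm σ with hudef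
  have hiso_app : ∀ x, iso x = Φ x := fun x => rfl
  have hΦu : ∀ σ, Φ (u σ) = σ := fun σ => iso.apply_symm_apply σ
  have hu0 : u 0 = 0 := by
    have : iso (0:ℝ) = 0 := by
      rw [hiso_app, hΦ_eq 0 ⟨le_refl 0, hδ.le⟩, hφ0]
    simp only [hudef]
    rw [OrderIso.symm_apply_eq, this]
  have huδ : u (φ δ) = δ := by
    have : iso δ = φ δ := by rw [hiso_app, hΦ_eq δ (right_mem_Icc.2 hδ.le)]
    simp only [hudef]
    rw [OrderIso.symm_apply_eq, this]
  have hucont : Continuous u := iso.symm.continuous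
  have humono : StrictMono u := iso.symm.strictMono
  have hupos : ∀ σ : ℝ, 0 < σ → 0 < u σ := fun σ hσ => by
    have := humono hσ; rwa [hu0] at this
  have hmem : ∀ σ ∈ Ico (0:ℝ) (φ δ), u σ ∈ Icc 0 δ ∧ φ (u σ) = σ := by
    intro σ hσ
    have h1 : 0 ≤ u σ := by
      rcases eq_or_lt_of_le hσ.1 with h | h
      · rw [← h, hu0]
      · exact (hupos σ h).le
    have h2 : u σ ≤ δ := by
      have := humono.monotone (hσ.2.le)
      rwa [huδ] at this
    refine ⟨⟨h1, h2⟩, ?_⟩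
    rw [← hΦ_eq (u σ) ⟨h1, h2⟩, hΦu]
  -- the limit
  have hu_tendsto : Tendsto u (nhdsWithin 0 (Ioi 0)) (nhdsWithin 0 (Ioi 0)) := by
    apply tendsto_nhdsWithin_of_tendsto_nhds_of_eventually_within
    · have := hucont.tendsto 0
      rw [hu0] at this
      exact this.mono_left nhdsWithin_le_nhds
    · exact eventually_mem_of_tendsto_nhdsWithin (tendsto_id) |>.mono fun σ hσ => hupos σ hσ
  have hw : Tendsto (fun y => y / Real.sqrt (φ y / a)) (nhdsWithin 0 (Ioi 0)) (nhds 1) := by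
    have h1 : Tendsto (fun y => φ y / a / y ^ 2) (nhdsWithin 0 (Ioi 0)) (nhds 1) := by
      have := hlim.div_const a
      rw [div_self ha.ne'] at this
      refine this.congr fun y => ?_
      rw [div_right_comm]
    have h2 : Tendsto (fun y => Real.sqrt (φ y / a / y ^ 2)) (nhdsWithin 0 (Ioi 0)) (nhds 1) := by
      have := (Real.continuous_sqrt.tendsto 1).comp h1
      simpa [Function.comp_def] using this
    have h3 : Tendsto (fun y => Real.sqrt (φ y / a) / y) (nhdsWithin 0 (Ioi 0)) (nhds 1) := by
      refine h2.congr' ?_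
      filter_upwards [Ioo_mem_nhdsGT_of_mem (Set.mem_Ico.2 ⟨le_refl (0:ℝ), hδ⟩)] with y hy
      have hx : 0 ≤ φ y / a := div_nonneg (φnonneg y ⟨hy.1.le, hy.2.le⟩) ha.le
      rw [Real.sqrt_div hx, Real.sqrt_sq hy.1.le]
    have h4 := h3.inv₀ one_ne_zero
    rw [inv_one] at h4
    refine h4.congr fun y => ?_
    rw [inv_div]
  refine ⟨φ δ, hφδ, u, hucont, hu0, hmem, hupos, ?_⟩
  have heq : (fun σ => u σ / Real.sqrt (σ / a))
      =ᶠ[nhdsWithin 0 (Ioi 0)] (fun y => y / Real.sqrt (φ y / a)) ∘ u := by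
    have hIoo : Ioo (0:ℝ) (φ δ) ∈ nhdsWithin 0 (Ioi 0) :=
      Ioo_mem_nhdsGT_of_mem ⟨le_refl 0, hφδ⟩
    filter_upwards [hIoo] with σ hσ
    have := (hmem σ ⟨hσ.1.le, hσ.2⟩).2
    simp only [Function.comp_apply, this]
  exact ((hw.comp hu_tendsto).congr' heq.symm)

/-- Bifurcation lemma for the reduced Liapunov–Schmidt equation:
if `f(y,σ)` is smooth with `f(0,0) = 0`, `f_y(0,0) = 0`, `f_σ(0,0) = 1` and
`f_{yy}(0,0) = -2a` with `a > 0`, then for small `σ > 0` the equation `f(y,σ) = 0`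
has two nonzero solution branches `y = ±√(σ/a) + o(√σ)` terminating at the origin. -/
theorem two_branches_of_reduced_equation
    (f : ℝ × ℝ → ℝ) (hf : ContDiff ℝ (⊤ : ℕ∞) f)
    (a : ℝ) (ha : 0 < a)
    (h00 : f (0, 0) = 0)
    (hy : fderiv ℝ f (0, 0) (1, 0) = 0)
    (hσ : fderiv ℝ f (0, 0) (0, 1) = 1)
    (hyy : iteratedFDeriv ℝ 2 f (0, 0) ![(1, 0), (1, 0)] = -2 * a) :
    ∃ ε > (0 : ℝ), ∃ yp ym : ℝ → ℝ,
      ContinuousOn yp (Ico 0 ε) ∧ ContinuousOn ym (Ico 0 ε) ∧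
      yp 0 = 0 ∧ ym 0 = 0 ∧
      (∀ σ ∈ Ico (0 : ℝ) ε, f (yp σ, σ) = 0 ∧ f (ym σ, σ) = 0) ∧
      (∀ σ ∈ Ioo (0 : ℝ) ε, ym σ < 0 ∧ 0 < yp σ) ∧
      Tendsto (fun σ => yp σ / Real.sqrt (σ / a)) (nhdsWithin 0 (Ioi 0)) (nhds 1) ∧
      Tendsto (fun σ => ym σ / Real.sqrt (σ / a)) (nhdsWithin 0 (Ioi 0)) (nhds (-1)) := by
  have hf2 : ContDiff ℝ 2 f := hf.of_le (WithTop.coe_le_coe.2 le_top)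
  have hfdiff : Differentiable ℝ f := hf2.differentiable (by norm_num)
  -- the map F
  set F : ℝ × ℝ → ℝ × ℝ := fun p => (p.1, f p) with hFdef
  have hFsmooth : ContDiff ℝ 2 F := contDiff_fst.prodMk hf2
  have hsnd : fderiv ℝ f (0, 0) = ContinuousLinearMap.snd ℝ ℝ ℝ := by
    apply ContinuousLinearMap.ext
    rintro ⟨h, k⟩
    have hhk : ((h, k) : ℝ × ℝ) = h • ((1:ℝ), (0:ℝ)) + k • ((0:ℝ), (1:ℝ)) := by
      simp [Prod.ext_iff]
    rw [hhk, map_add, map_smul, map_smul, hy, hσ]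
    simp
  set e := ContinuousLinearEquiv.refl ℝ (ℝ × ℝ) with hedef
  have hF' : HasFDerivAt F (e : (ℝ × ℝ) →L[ℝ] (ℝ × ℝ)) (0, 0) := by
    have h1 : HasFDerivAt F ((ContinuousLinearMap.fst ℝ ℝ ℝ).prod (fderiv ℝ f (0,0))) (0, 0) :=
      (hasFDerivAt_fst).prodMk (hfdiff (0,0)).hasFDerivAt
    convert h1 using 1
    apply ContinuousLinearMap.ext
    rintro ⟨h, k⟩
    rw [hsnd]
    rfl
  have hFat : ContDiffAt ℝ 2 F (0, 0) := hFsmooth.contDiffAt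
  have h2le : (2 : WithTop ℕ∞) ≠ 0 := by norm_num
  set G := hFat.localInverse hF' h2le with hGdef
  have hF00 : F (0, 0) = (0, 0) := by show ((0:ℝ), f (0,0)) = ((0:ℝ),(0:ℝ)); rw [h00]
  have hG0 : G (0, 0) = (0, 0) := by
    have := hFat.localInverse_apply_image hF' h2le
    rwa [hF00] at this
  have hGsmooth : ContDiffAt ℝ 2 G (0, 0) := by
    have := hFat.to_localInverse hF' h2le
    rwa [hF00] at this
  have hright : ∀ᶠ p in nhds ((0:ℝ), (0:ℝ)), F (G p) = p := by
    have hS := hFat.hasStrictFDerivAt' hF' h2le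
    have := hS.eventually_right_inverse
    rwa [hF00] at this
  set φ : ℝ → ℝ := fun y => (G (y, 0)).2 with hφdef
  have hφ0 : φ 0 = 0 := by show (G (0,0)).2 = 0; rw [hG0]
  have hinner : ContDiffAt ℝ 2 (fun y : ℝ => ((y, (0:ℝ)) : ℝ × ℝ)) 0 :=
    (contDiff_id.prodMk contDiff_const).contDiffAt
  have hφsmooth : ContDiffAt ℝ 2 φ 0 :=
    ContDiffAt.snd (f := fun y : ℝ => G (y, 0))
      (ContDiffAt.comp (f := fun y : ℝ => ((y, (0:ℝ)) : ℝ × ℝ)) (0:ℝ) hGsmooth hinner)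
  -- roots near zero
  have hroot : ∀ᶠ y in nhds (0:ℝ), f (y, φ y) = 0 := by
    have hcont0 : Tendsto (fun y : ℝ => ((y, (0:ℝ)) : ℝ × ℝ)) (nhds 0) (nhds (0, 0)) :=
      (continuous_id.prodMk continuous_const).tendsto 0
    filter_upwards [hcont0.eventually hright] with y h
    have h1 : (G (y, 0)).1 = y := congrArg Prod.fst h
    have h2 : f (G (y, 0)) = 0 := congrArg Prod.snd h
    have : ((y, φ y) : ℝ × ℝ) = G (y, 0) := by
      refine Prod.ext ?_ rfl
      exact h1.symm
    rw [this]
    exact h2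
  -- set up ψ = derivative of φ
  have h11 : ((1:ℕ) + 1 : WithTop ℕ∞) = 2 := by norm_num
  obtain ⟨φ', ⟨u, hu, hφ'⟩, hφ'1⟩ :=
    contDiffAt_succ_iff_hasFDerivAt.mp (h11 ▸ hφsmooth : ContDiffAt ℝ ((1:ℕ)+1) φ 0)
  set ψ : ℝ → ℝ := fun y => φ' y 1 with hψdef
  have hψ : ∀ y ∈ u, HasDerivAt φ (ψ y) y := fun y hy => (hφ' y hy).hasDerivAt
  have hψdiff : DifferentiableAt ℝ ψ 0 :=
    (hφ'1.differentiableAt (by simp)).clm_apply (differentiableAt_const 1)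
  set m := deriv ψ 0 with hmdef
  have hψm : HasDerivAt ψ m 0 := hψdiff.hasDerivAt
  -- open neighborhood with all properties
  obtain ⟨V, hVsub, hVopen, hV0⟩ := mem_nhds_iff.mp (inter_mem hu (hroot.mono fun y h => h))
  have hVu : V ⊆ u := fun y hy => (hVsub hy).1
  have hVroot : ∀ y ∈ V, f (y, φ y) = 0 := fun y hy => (hVsub hy).2
  -- first order equation on V
  have hfder : ∀ p : ℝ × ℝ, HasFDerivAt f (fderiv ℝ f p) p := fun p => (hfdiff p).hasFDerivAt
  have hchain : ∀ y ∈ V, HasDerivAt (fun t => f (t, φ t)) (fderiv ℝ f (y, φ y) (1, ψ y)) y := by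
    intro y hyV
    exact (hfder (y, φ y)).comp_hasDerivAt y ((hasDerivAt_id y).prodMk (hψ y (hVu hyV)))
  have hzero : ∀ y ∈ V, HasDerivAt (fun t => f (t, φ t)) 0 y := by
    intro y hyV
    exact (hasDerivAt_const y (0:ℝ)).congr_of_eventuallyEq
      (eventually_of_mem (hVopen.mem_nhds hyV) fun t ht => hVroot t ht)
  have hh0 : ∀ y ∈ V, fderiv ℝ f (y, φ y) (1, ψ y) = 0 := fun y hyV =>
    (hchain y hyV).unique (hzero y hyV)
  -- ψ 0 = 0
  have hψ00 : ψ 0 = 0 := by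
    have h1 := hh0 0 hV0
    rw [hφ0] at h1
    have h2 : ((1, ψ 0) : ℝ × ℝ) = (1, 0) + ψ 0 • ((0:ℝ), (1:ℝ)) := by
      simp [Prod.ext_iff]
    rw [h2, map_add, map_smul, hy, hσ] at h1
    simpa using h1
  -- second order: m = 2a
  have hm2a : m = 2 * a := by
    set h : ℝ → ℝ := fun y => fderiv ℝ f (y, φ y) (1, ψ y) with hhdef
    have hhzero : HasDerivAt h 0 0 := by
      refine (hasDerivAt_const 0 (0:ℝ)).congr_of_eventuallyEq ?_
      exact eventually_of_mem (hVopen.mem_nhds hV0) fun t ht => hh0 t ht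
    have hfd1 : ContDiff ℝ 1 (fderiv ℝ f) := hf.fderiv_right (WithTop.coe_le_coe.2 le_top)
    have hA : HasDerivAt (fun y => fderiv ℝ f (y, φ y))
        (fderiv ℝ (fderiv ℝ f) (0, 0) (1, 0)) 0 := by
      have hφ00 : HasDerivAt φ 0 0 := by
        have := hψ 0 (mem_of_mem_nhds hu)
        rwa [hψ00] at this
      have h1 := ((hfd1.differentiable one_ne_zero) (0, φ 0)).hasFDerivAt.comp_hasDerivAt 0
        ((hasDerivAt_id 0).prodMk hφ00)
      rwa [hφ0] at h1
    have hv : HasDerivAt (fun y => (((1:ℝ), ψ y) : ℝ × ℝ)) (0, m) 0 :=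
      (hasDerivAt_const 0 (1:ℝ)).prodMk hψm
    have hAv : HasDerivAt h
        (fderiv ℝ (fderiv ℝ f) (0, 0) (1, 0) (1, ψ 0) + fderiv ℝ f (0, φ 0) (0, m)) 0 :=
      hA.clm_apply hv
    have heval : fderiv ℝ (fderiv ℝ f) (0, 0) (1, 0) (1, ψ 0) + fderiv ℝ f (0, φ 0) (0, m)
        = -2 * a + m := by
      rw [hψ00, hφ0]
      have h1 : fderiv ℝ (fderiv ℝ f) ((0:ℝ), (0:ℝ)) (1, 0) (1, 0) = -2 * a := by
        rw [← hyy, iteratedFDeriv_two_apply]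
        simp
      have h2 : fderiv ℝ f ((0:ℝ), (0:ℝ)) ((0:ℝ), m) = m := by
        have : (((0:ℝ), m) : ℝ × ℝ) = m • ((0:ℝ), (1:ℝ)) := by simp [Prod.ext_iff]
        rw [this, map_smul, hσ, smul_eq_mul, mul_one]
      rw [h1, h2]
    rw [heval] at hAv
    have := hAv.unique hhzero
    linarith
  rw [hm2a] at hψm
  -- slope limit
  have hslope : Tendsto (fun y => ψ y / y) (nhdsWithin 0 {(0:ℝ)}ᶜ) (nhds (2 * a)) := by
    have := hasDerivAt_iff_tendsto_slope.mp hψm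
    refine this.congr fun y => ?_
    rw [slope_def_field]
    rw [hψ00]
    simp [div_eq_inv_mul]
  -- choose δ
  have hev : ∀ᶠ y in nhds (0:ℝ), (y ≠ 0 → a < ψ y / y) ∧ y ∈ V := by
    have h1 : ∀ᶠ y in nhdsWithin 0 {(0:ℝ)}ᶜ, a < ψ y / y :=
      hslope.eventually (eventually_gt_nhds (by linarith))
    have h2 : ∀ᶠ y in nhds (0:ℝ), y ≠ 0 → a < ψ y / y := by
      rw [eventually_nhdsWithin_iff] at h1
      exact h1.mono fun y h hy => h hy
    exact h2.and (eventually_of_mem (hVopen.mem_nhds hV0) fun y hy => hy)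
  obtain ⟨δ0, hδ0, hδball⟩ := Metric.eventually_nhds_iff.mp hev
  set δ := δ0 / 2 with hδdef
  have hδ : 0 < δ := by positivity
  have hball : ∀ y ∈ Icc (-δ) δ, (y ≠ 0 → a < ψ y / y) ∧ y ∈ V := by
    intro y hy
    apply hδball
    rw [Real.dist_eq, sub_zero]
    have h1 : |y| ≤ δ := abs_le.2 hy
    linarith
  have hIccV : Icc (-δ) δ ⊆ V := fun y hy => (hball y hy).2
  have hderIcc : ∀ y ∈ Icc (-δ) δ, HasDerivAt φ (ψ y) y := fun y hy =>
    hψ y (hVu (hIccV hy))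
  have hcontIcc : ContinuousOn φ (Icc (-δ) δ) := fun y hy =>
    (hderIcc y hy).differentiableAt.continuousAt.continuousWithinAt
  have hψpos : ∀ y ∈ Ioo (0:ℝ) δ, 0 < ψ y := by
    intro y hy
    have h1 : a < ψ y / y := (hball y ⟨by linarith [hy.1], hy.2.le⟩).1 hy.1.ne'
    have h2 : 0 < ψ y / y := lt_trans ha h1
    rcases div_pos_iff.mp h2 with ⟨h3, _⟩ | ⟨_, h4⟩
    · exact h3
    · linarith [hy.1]
  have hψneg : ∀ y ∈ Ioo (-δ) (0:ℝ), ψ y < 0 := by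
    intro y hy
    have h1 : a < ψ y / y := (hball y ⟨hy.1.le, by linarith [hy.2]⟩).1 hy.2.ne
    have h2 : 0 < ψ y / y := lt_trans ha h1
    rcases div_pos_iff.mp h2 with ⟨_, h4⟩ | ⟨h3, _⟩
    · linarith [hy.2]
    · exact h3
  have hmono : StrictMonoOn φ (Icc 0 δ) := by
    apply strictMonoOn_of_deriv_pos (convex_Icc 0 δ)
    · exact hcontIcc.mono (Icc_subset_Icc (by linarith) le_rfl)
    · intro x hx
      rw [interior_Icc] at hx
      rw [(hderIcc x ⟨by linarith [hx.1], hx.2.le⟩).deriv]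
      exact hψpos x hx
  have hanti : StrictAntiOn φ (Icc (-δ) 0) := by
    apply strictAntiOn_of_deriv_neg (convex_Icc (-δ) 0)
    · exact hcontIcc.mono (Icc_subset_Icc le_rfl hδ.le)
    · intro x hx
      rw [interior_Icc] at hx
      rw [(hderIcc x ⟨hx.1.le, by linarith [hx.2]⟩).deriv]
      exact hψneg x hx
  -- L'Hopital
  have hφcont0 : Tendsto φ (nhds 0) (nhds 0) := by
    have := (hderIcc 0 ⟨by linarith, hδ.le⟩).differentiableAt.continuousAt
    rwa [ContinuousAt, hφ0] at this
  have hsq : ∀ x : ℝ, HasDerivAt (fun y : ℝ => y ^ 2) (2 * x) x := by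
    intro x
    have := hasDerivAt_pow 2 x
    simpa using this
  have hslopeR : Tendsto (fun y => ψ y / (2 * y)) (nhdsWithin 0 (Ioi 0)) (nhds a) := by
    have h1 : Tendsto (fun y => ψ y / y) (nhdsWithin 0 (Ioi 0)) (nhds (2 * a)) :=
      hslope.mono_left (nhdsWithin_mono 0 fun y hy => ne_of_gt hy)
    have h2 := h1.div_const 2
    rw [mul_comm, mul_div_assoc, div_self (by norm_num : (2:ℝ) ≠ 0), mul_one] at h2
    refine h2.congr fun y => ?_
    rw [div_div, mul_comm]
  have hslopeL : Tendsto (fun y => ψ y / (2 * y)) (nhdsWithin 0 (Iio 0)) (nhds a) := by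
    have h1 : Tendsto (fun y => ψ y / y) (nhdsWithin 0 (Iio 0)) (nhds (2 * a)) :=
      hslope.mono_left (nhdsWithin_mono 0 fun y hy => ne_of_lt hy)
    have h2 := h1.div_const 2
    rw [mul_comm, mul_div_assoc, div_self (by norm_num : (2:ℝ) ≠ 0), mul_one] at h2
    refine h2.congr fun y => ?_
    rw [div_div, mul_comm]
  have hVnhds : V ∈ nhds (0:ℝ) := hVopen.mem_nhds hV0
  have hlimR : Tendsto (fun y => φ y / y ^ 2) (nhdsWithin 0 (Ioi 0)) (nhds a) := by
    apply HasDerivAt.lhopital_zero_nhdsGT (f' := ψ) (g' := fun y => 2 * y)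
    · exact eventually_of_mem (nhdsWithin_le_nhds hVnhds) fun y hy => hψ y (hVu hy)
    · exact Eventually.of_forall fun y => hsq y
    · exact eventually_of_mem self_mem_nhdsWithin fun y (hy : (0:ℝ) < y) => by positivity
    · exact hφcont0.mono_left nhdsWithin_le_nhds
    · have : Tendsto (fun y : ℝ => y ^ 2) (nhds 0) (nhds 0) := by
        have := (continuous_pow 2).tendsto (0:ℝ)
        simpa using this
      exact this.mono_left nhdsWithin_le_nhds
    · exact hslopeR
  have hlimL : Tendsto (fun y => φ y / y ^ 2) (nhdsWithin 0 (Iio 0)) (nhds a) := by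
    apply HasDerivAt.lhopital_zero_nhdsLT (f' := ψ) (g' := fun y => 2 * y)
    · exact eventually_of_mem (nhdsWithin_le_nhds hVnhds) fun y hy => hψ y (hVu hy)
    · exact Eventually.of_forall fun y => hsq y
    · exact eventually_of_mem self_mem_nhdsWithin fun y (hy : y < (0:ℝ)) => by
        intro h
        rcases mul_eq_zero.mp h with h | h
        · norm_num at h
        · exact hy.ne h
    · exact hφcont0.mono_left nhdsWithin_le_nhds
    · have : Tendsto (fun y : ℝ => y ^ 2) (nhds 0) (nhds 0) := by
        have := (continuous_pow 2).tendsto (0:ℝ)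
        simpa using this
      exact this.mono_left nhdsWithin_le_nhds
    · exact hslopeL
  -- apply the branch lemma on both sides
  obtain ⟨εp, hεp, up, hupc, hup0, hupmem, huppos, huplim⟩ :=
    branch_lemma φ δ a hδ ha hmono (hcontIcc.mono (Icc_subset_Icc (by linarith) le_rfl)) hφ0 hlimR
  have hmono' : StrictMonoOn (fun y => φ (-y)) (Icc 0 δ) := by
    intro x hx y hy' hxy
    exact hanti ⟨neg_le_neg hy'.2, by linarith [hy'.1]⟩ ⟨neg_le_neg hx.2, by linarith [hx.1]⟩
      (neg_lt_neg hxy)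
  have hcont' : ContinuousOn (fun y => φ (-y)) (Icc 0 δ) := by
    apply hcontIcc.comp continuous_neg.continuousOn
    intro y hy
    simp only [mem_Icc] at hy ⊢
    constructor <;> linarith [hy.1, hy.2]
  have hφm0 : φ (-(0:ℝ)) = 0 := by rw [neg_zero, hφ0]
  have hlim' : Tendsto (fun y => φ (-y) / y ^ 2) (nhdsWithin 0 (Ioi 0)) (nhds a) := by
    have hneg : Tendsto (fun y : ℝ => -y) (nhdsWithin 0 (Ioi 0)) (nhdsWithin 0 (Iio 0)) := by
      apply tendsto_nhdsWithin_of_tendsto_nhds_of_eventually_within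
      · have := continuous_neg.tendsto (0:ℝ)
        rw [neg_zero] at this
        exact this.mono_left nhdsWithin_le_nhds
      · exact eventually_of_mem self_mem_nhdsWithin fun y (hy : (0:ℝ) < y) => by
          simpa using hy
    have h1 := hlimL.comp hneg
    refine h1.congr fun y => ?_
    simp only [Function.comp_apply, neg_sq]
  obtain ⟨εm, hεm, um, humc, hum0, hummem, humpos, humlim⟩ :=
    branch_lemma (fun y => φ (-y)) δ a hδ ha hmono' hcont' hφm0 hlim'
  refine ⟨min εp εm, lt_min hεp hεm, up, fun σ => -(um σ), hupc.continuousOn,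
    (humc.neg).continuousOn, hup0, by show -(um 0) = 0; rw [hum0, neg_zero], ?_, ?_, huplim, ?_⟩
  · intro σ hσ
    have hσp : σ ∈ Ico (0:ℝ) εp := ⟨hσ.1, lt_of_lt_of_le hσ.2 (min_le_left _ _)⟩
    have hσm : σ ∈ Ico (0:ℝ) εm := ⟨hσ.1, lt_of_lt_of_le hσ.2 (min_le_right _ _)⟩
    obtain ⟨hupIcc, hupφ⟩ := hupmem σ hσp
    obtain ⟨humIcc, humφ⟩ := hummem σ hσm
    constructor
    · have h1 : f (up σ, φ (up σ)) = 0 :=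
        hVroot (up σ) (hIccV ⟨by linarith [hupIcc.1], hupIcc.2⟩)
      rwa [hupφ] at h1
    · have h1 : f (-(um σ), φ (-(um σ))) = 0 :=
        hVroot (-(um σ)) (hIccV ⟨neg_le_neg humIcc.2, by linarith [humIcc.1]⟩)
      rwa [humφ] at h1
  · intro σ hσ
    exact ⟨neg_lt_zero.mpr (humpos σ hσ.1), huppos σ hσ.1⟩
  · have h1 := humlim.neg
    rw [show -(1:ℝ) = (-1 : ℝ) from rfl] at h1
    refine h1.congr fun σ => ?_
    rw [neg_div]
end

section
/- (Fredholm's Alternative for periodic linear systems.) Let T > 0, let A : ℝ → M_n(ℝ) be a continuous T-periodic matrix-valued function, and let f : ℝ → ℝⁿ be continuous and T-periodic. Then the equation ẋ(t) = A(t)x(t) + f(t) has a T-periodic C¹ solution x : ℝ → ℝⁿ if and only if ∫₀ᵀ ⟨y(t), f(t)⟩ dt = 0 for every T-periodic C¹ solution y : ℝ → ℝⁿ of the adjoint equation ẏ(t) = −A(t)ᵀ y(t). -/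
/-!
Let `Φ ξ` be the solution of `ẋ = A x` with `x 0 = ξ` and `z` the solution of `ẋ = A x + f` with
`z 0 = 0`. The solution `Φ ξ + z` is `T`-periodic iff `ξ - Φ ξ T = z T`, and `ξ ↦ ξ - Φ ξ T` is
linear, so a periodic solution exists iff `η ⬝ᵥ z T = 0` for every `η` orthogonal to the range of
this map. Since `y ⬝ᵥ x` is constant when `ẋ = A x` and `ẏ = -Aᵀ y`, these `η` are exactly the
values `y 0` of the `T`-periodic adjoint solutions `y`, and for them
`η ⬝ᵥ z T = y T ⬝ᵥ z T - y 0 ⬝ᵥ z 0 = ∫₀ᵀ y ⬝ᵥ f`.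

Global existence for linear equations comes from Picard iteration on compact intervals, where the
`m`-th iterate of the Picard operator is Lipschitz with constant `(K (b - a))ᵐ / m!`.
-/

open Set Function Metric Filter Topology MeasureTheory intervalIntegral ODE
open Matrix
open scoped NNReal Nat

section Picard

variable {E : Type*} [NormedAddCommGroup E] [NormedSpace ℝ E] {v : ℝ → E → E} {a b t₀ : ℝ}

noncomputable def picardIcc (hab : a ≤ b) (hv : Continuous (uncurry v)) (t₀ : ℝ) (x₀ : E)
    (u : C(Icc a b, E)) : C(Icc a b, E) where
  toFun t := picard v t₀ x₀ (u.IccExtend hab) t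
  continuous_toFun :=
    (continuous_const.add (continuous_primitive (fun _ _ =>
      (hv.comp (continuous_id.prodMk (u.IccExtend hab).continuous)).intervalIntegrable
        _ _) t₀)).comp continuous_subtype_val

lemma picardIcc_apply (hab : a ≤ b) (hv : Continuous (uncurry v)) (x₀ : E) (u : C(Icc a b, E))
    (t : Icc a b) : picardIcc hab hv t₀ x₀ u t = picard v t₀ x₀ (u.IccExtend hab) t := rfl

variable {K : ℝ≥0}

lemma dist_picardIcc_le (hab : a ≤ b) (hv : Continuous (uncurry v))
    (hK : ∀ t ∈ Icc a b, LipschitzWith K (v t)) (ht₀ : t₀ ∈ Icc a b) (x₀ : E)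
    {u₁ u₂ : C(Icc a b, E)} {m : ℕ} {d : ℝ}
    (h : ∀ t : Icc a b, dist (u₁ t) (u₂ t) ≤ (K * |t - t₀|) ^ m / m ! * d) (t : Icc a b) :
    dist (picardIcc hab hv t₀ x₀ u₁ t) (picardIcc hab hv t₀ x₀ u₂ t)
      ≤ (K * |t - t₀|) ^ (m + 1) / (m + 1)! * d := by
  set w₁ := fun τ => v τ (u₁.IccExtend hab τ)
  set w₂ := fun τ => v τ (u₂.IccExtend hab τ)
  have hw₁ : Continuous w₁ := hv.comp (continuous_id.prodMk (u₁.IccExtend hab).continuous)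
  have hw₂ : Continuous w₂ := hv.comp (continuous_id.prodMk (u₂.IccExtend hab).continuous)
  have hpt : ∀ τ ∈ uIoc t₀ (t : ℝ), ‖w₁ τ - w₂ τ‖ ≤ K * ((K * |τ - t₀|) ^ m / m ! * d) := by
    intro τ hτ
    have hτ' : τ ∈ Icc a b := uIcc_subset_Icc ht₀ t.2 (uIoc_subset_uIcc hτ)
    rw [← dist_eq_norm]
    refine ((hK τ hτ').dist_le_mul _ _).trans (mul_le_mul_of_nonneg_left ?_ K.2)
    simpa [w₁, w₂, IccExtend_of_mem hab _ hτ'] using h ⟨τ, hτ'⟩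
  rw [dist_eq_norm, picardIcc_apply, picardIcc_apply, picard_apply, picard_apply,
    add_sub_add_left_eq_sub, ← integral_sub (hw₁.intervalIntegrable _ _)
      (hw₂.intervalIntegrable _ _), norm_integral_eq_norm_integral_uIoc]
  calc ‖∫ τ in uIoc t₀ (t : ℝ), (w₁ τ - w₂ τ)‖
      ≤ ∫ τ in uIoc t₀ (t : ℝ), K * ((K * |τ - t₀|) ^ m / m ! * d) :=
        norm_integral_le_of_norm_le (Continuous.integrableOn_uIoc (by fun_prop))
          ((ae_restrict_mem measurableSet_uIoc).mono hpt)
    _ = (K * |t - t₀|) ^ (m + 1) / (m + 1)! * d := by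
      simp_rw [mul_pow, div_eq_mul_inv, mul_assoc, MeasureTheory.integral_const_mul,
        MeasureTheory.integral_mul_const, integral_pow_abs_sub_uIoc, div_eq_mul_inv,
        pow_succ' (K : ℝ), Nat.factorial_succ, Nat.cast_mul, Nat.cast_succ, mul_inv, mul_assoc]

lemma dist_picardIcc_iterate_le (hab : a ≤ b) (hv : Continuous (uncurry v))
    (hK : ∀ t ∈ Icc a b, LipschitzWith K (v t)) (ht₀ : t₀ ∈ Icc a b) (x₀ : E)
    (u₁ u₂ : C(Icc a b, E)) (m : ℕ) (t : Icc a b) :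
    dist ((picardIcc hab hv t₀ x₀)^[m] u₁ t) ((picardIcc hab hv t₀ x₀)^[m] u₂ t)
      ≤ (K * |t - t₀|) ^ m / m ! * dist u₁ u₂ := by
  induction m generalizing t with
  | zero => simpa using ContinuousMap.dist_apply_le_dist t
  | succ m ih =>
    rw [iterate_succ_apply', iterate_succ_apply']
    exact dist_picardIcc_le hab hv hK ht₀ x₀ ih t

lemma exists_contractingWith_iterate_picardIcc (hab : a ≤ b) (hv : Continuous (uncurry v))
    (hK : ∀ t ∈ Icc a b, LipschitzWith K (v t)) (ht₀ : t₀ ∈ Icc a b) (x₀ : E) :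
    ∃ (m : ℕ) (C : ℝ≥0), ContractingWith C (picardIcc hab hv t₀ x₀)^[m] := by
  have : Nonempty (Icc a b) := ⟨⟨t₀, ht₀⟩⟩
  obtain ⟨m, hm⟩ := ((FloorSemiring.tendsto_pow_div_factorial_atTop ((K : ℝ) * (b - a))).eventually
    (gt_mem_nhds zero_lt_one)).exists
  have hC : 0 ≤ ((K : ℝ) * (b - a)) ^ m / m ! := by
    have : 0 ≤ b - a := sub_nonneg.2 hab
    positivity
  refine ⟨m, ⟨_, hC⟩, by exact_mod_cast hm, LipschitzWith.of_dist_le_mul fun u₁ u₂ => ?_⟩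
  refine ContinuousMap.dist_le_iff_of_nonempty.2 fun t => ?_
  refine (dist_picardIcc_iterate_le hab hv hK ht₀ x₀ u₁ u₂ m t).trans ?_
  have ht : |(t : ℝ) - t₀| ≤ b - a :=
    abs_sub_le_iff.2 ⟨by linarith [t.2.2, ht₀.1], by linarith [t.2.1, ht₀.2]⟩
  change _ ≤ ((K : ℝ) * (b - a)) ^ m / m ! * dist u₁ u₂
  gcongr

theorem exists_isIntegralCurveOn_Icc [CompleteSpace E] (hab : a ≤ b)
    (hv : Continuous (uncurry v)) (hK : ∀ t ∈ Icc a b, LipschitzWith K (v t))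
    (ht₀ : t₀ ∈ Icc a b) (x₀ : E) :
    ∃ x : ℝ → E, x t₀ = x₀ ∧ IsIntegralCurveOn x v (Icc a b) := by
  have : Nonempty (Icc a b) := ⟨⟨t₀, ht₀⟩⟩
  obtain ⟨m, C, hC⟩ := exists_contractingWith_iterate_picardIcc hab hv hK ht₀ x₀
  set u := ContractingWith.fixedPoint _ hC
  have hu : picardIcc hab hv t₀ x₀ u = u := hC.isFixedPt_fixedPoint_iterate
  set x := u.IccExtend hab
  have hfix : ∀ s ∈ Icc a b, x s = picard v t₀ x₀ x s := fun s hs => by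
    rw [← picardIcc_apply hab hv x₀ u ⟨s, hs⟩, hu]
    exact IccExtend_of_mem hab u hs
  refine ⟨x, (hfix t₀ ht₀).trans picard_apply₀, fun t ht => ?_⟩
  exact (hasDerivWithinAt_picard_Icc (u := univ) ht₀ hv.continuousOn x.continuous.continuousOn
    (fun _ _ => mem_univ _) x₀ ht).congr_of_mem hfix ht

end Picard

section GlobalSolutions

variable {E : Type*} [NormedAddCommGroup E] {v : ℝ → E → E}

def UniformlyLipschitzOnIcc (v : ℝ → E → E) : Prop :=
  ∀ a b : ℝ, ∃ K : ℝ≥0, ∀ t ∈ Icc a b, LipschitzWith K (v t)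

lemma UniformlyLipschitzOnIcc.add_const (hv : UniformlyLipschitzOnIcc v) (g : ℝ → E) :
    UniformlyLipschitzOnIcc fun t x => v t x + g t := fun a b =>
  let ⟨K, hK⟩ := hv a b
  ⟨K + 0, fun t ht => (hK t ht).add (LipschitzWith.const (g t))⟩

variable [NormedSpace ℝ E]

lemma eqOn_ball_of_hasDerivAt (hv : UniformlyLipschitzOnIcc v) {t₀ r : ℝ} {x y : ℝ → E}
    (hx : ∀ t ∈ ball t₀ r, HasDerivAt x (v t (x t)) t)
    (hy : ∀ t ∈ ball t₀ r, HasDerivAt y (v t (y t)) t) (h : x t₀ = y t₀) :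
    EqOn x y (ball t₀ r) := fun t ht => by
  have ht₀ : t₀ ∈ ball t₀ r := mem_ball_self (dist_nonneg.trans_lt ht)
  obtain ⟨K, hK⟩ := hv (t₀ - r) (t₀ + r)
  rw [Real.ball_eq_Ioo] at ht ht₀ hx hy
  exact ODE_solution_unique_of_mem_Ioo (s := fun _ => univ)
    (fun t ht => (hK t (Ioo_subset_Icc_self ht)).lipschitzOnWith) ht₀
    (fun t ht => ⟨hx t ht, mem_univ _⟩) (fun t ht => ⟨hy t ht, mem_univ _⟩) h ht

theorem IsIntegralCurve.eq_of_apply_eq (hv : UniformlyLipschitzOnIcc v) {x y : ℝ → E} {t₀ : ℝ}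
    (hx : IsIntegralCurve x v) (hy : IsIntegralCurve y v) (h : x t₀ = y t₀) : x = y :=
  funext fun t => eqOn_ball_of_hasDerivAt hv (r := dist t t₀ + 1) (fun s _ => hx s)
    (fun s _ => hy s) h (mem_ball.2 (lt_add_one _))

/-- Solutions on the balls `ball t₀ N` agree on their common domains, so they glue. -/
theorem exists_isIntegralCurve [CompleteSpace E] (hv : Continuous (uncurry v))
    (hlip : UniformlyLipschitzOnIcc v) (t₀ : ℝ) (x₀ : E) :
    ∃ x : ℝ → E, x t₀ = x₀ ∧ IsIntegralCurve x v := by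
  have hloc : ∀ N : ℕ, ∃ x : ℝ → E, x t₀ = x₀ ∧
      ∀ t ∈ ball t₀ N, HasDerivAt x (v t (x t)) t := fun N => by
    obtain ⟨K, hK⟩ := hlip (t₀ - N) (t₀ + N)
    have hN : (0 : ℝ) ≤ N := N.cast_nonneg
    obtain ⟨x, hx₀, hx⟩ := exists_isIntegralCurveOn_Icc (by linarith) hv hK
      (t₀ := t₀) ⟨by linarith, by linarith⟩ x₀
    refine ⟨x, hx₀, fun t ht => ?_⟩
    rw [Real.ball_eq_Ioo] at ht
    exact (hx t (Ioo_subset_Icc_self ht)).hasDerivAt (Icc_mem_nhds ht.1 ht.2)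
  choose X hX₀ hX using hloc
  have hagree : ∀ M N : ℕ, EqOn (X M) (X N) (ball t₀ (min M N)) := fun M N =>
    eqOn_ball_of_hasDerivAt hlip (fun s hs => hX M s (ball_subset_ball (min_le_left _ _) hs))
      (fun s hs => hX N s (ball_subset_ball (min_le_right _ _) hs)) ((hX₀ M).trans (hX₀ N).symm)
  have hlt : ∀ s, s ∈ ball t₀ (⌊dist s t₀⌋₊ + 1 : ℕ) := fun s => by
    rw [mem_ball]; push_cast; exact Nat.lt_floor_add_one _
  refine ⟨fun t => X (⌊dist t t₀⌋₊ + 1) t, hX₀ _, fun t => ?_⟩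
  refine (hX _ t (hlt t)).congr_of_eventuallyEq ?_
  filter_upwards [isOpen_ball.mem_nhds (hlt t)] with s hs
  exact hagree _ _ (mem_ball.2 (lt_min (hlt s) hs))

theorem IsIntegralCurve.periodic (hlip : UniformlyLipschitzOnIcc v) {T : ℝ} (hvT : Periodic v T)
    {x : ℝ → E} (hx : IsIntegralCurve x v) (hxT : x T = x 0) : Periodic x T := by
  have hshift : IsIntegralCurve (fun t => x (t + T)) v := fun t => by
    simpa [hvT t] using (hx (t + T)).comp_add_const t T
  exact congrFun (hshift.eq_of_apply_eq hlip hx (t₀ := 0) (by simpa using hxT))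

theorem IsIntegralCurve.contDiff_one (hv : Continuous (uncurry v)) {x : ℝ → E}
    (hx : IsIntegralCurve x v) : ContDiff ℝ 1 x := by
  refine contDiff_one_iff_deriv.2 ⟨fun t => (hx t).differentiableAt, ?_⟩
  rw [show deriv x = fun t => v t (x t) from funext fun t => (hx t).deriv]
  exact hv.comp (continuous_id.prodMk hx.continuous)

lemma isIntegralCurve_of_deriv_eq {x : ℝ → E} (hx : Differentiable ℝ x)
    (h : ∀ t, deriv x t = v t (x t)) : IsIntegralCurve x v :=
  fun t => h t ▸ (hx t).hasDerivAt

theorem exists_linearMap_isIntegralCurve [CompleteSpace E] (L : ℝ → E →ₗ[ℝ] E)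
    (hv : Continuous (uncurry fun t => ⇑(L t))) (hlip : UniformlyLipschitzOnIcc fun t => ⇑(L t))
    (t₀ : ℝ) : ∃ Φ : E →ₗ[ℝ] ℝ → E, ∀ ξ, Φ ξ t₀ = ξ ∧ IsIntegralCurve (Φ ξ) fun t => L t := by
  choose Φ hΦ₀ hΦ using exists_isIntegralCurve hv hlip t₀
  refine ⟨{ toFun := Φ, map_add' := fun ξ η => ?_, map_smul' := fun c ξ => ?_ },
    fun ξ => ⟨hΦ₀ ξ, hΦ ξ⟩⟩
  · refine (hΦ _).eq_of_apply_eq hlip (t₀ := t₀) (fun t => ?_) (by simp [hΦ₀])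
    simpa using (hΦ ξ t).add (hΦ η t)
  · refine (hΦ _).eq_of_apply_eq hlip (t₀ := t₀) (fun t => ?_) (by simp [hΦ₀])
    simpa using (hΦ ξ t).const_smul c

end GlobalSolutions

section Matrix

variable {ι : Type*} [Fintype ι]

theorem uniformlyLipschitzOnIcc_mulVec {M : ℝ → Matrix ι ι ℝ} (hM : Continuous M) :
    UniformlyLipschitzOnIcc fun t x => M t *ᵥ x := fun a b => by
  let L : Matrix ι ι ℝ →ₗ[ℝ] (ι → ℝ) →L[ℝ] ι → ℝ :=
    LinearMap.toContinuousLinearMap.toLinearMap ∘ₗ Matrix.mulVecBilin ℝ ℝ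
  obtain ⟨C, hC⟩ := isCompact_Icc.exists_bound_of_continuousOn
    (L.continuous_of_finiteDimensional.comp hM).continuousOn
  refine ⟨C.toNNReal, fun t ht => ?_⟩
  have hLt : ‖L (M t)‖₊ ≤ C.toNNReal := by
    rw [← NNReal.coe_le_coe, coe_nnnorm, Real.coe_toNNReal']
    exact (hC t ht).trans (le_max_left _ _)
  exact (L (M t)).lipschitz.weaken hLt

theorem HasDerivAt.dotProduct {x y : ℝ → ι → ℝ} {x' y' : ι → ℝ} {t : ℝ}
    (hx : HasDerivAt x x' t) (hy : HasDerivAt y y' t) :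
    HasDerivAt (fun s => x s ⬝ᵥ y s) (x' ⬝ᵥ y t + x t ⬝ᵥ y') t := by
  have h : ∀ i ∈ Finset.univ, HasDerivAt (fun s => x s i * y s i) (x' i * y t i + x t i * y' i) t :=
    fun i _ => (hasDerivAt_pi.1 hx i).mul (hasDerivAt_pi.1 hy i)
  simpa [_root_.dotProduct, Finset.sum_add_distrib] using HasDerivAt.fun_sum h

lemma hasDerivAt_dotProduct_of_adjoint {B : Matrix ι ι ℝ} {g : ι → ℝ} {x y : ℝ → ι → ℝ} {t : ℝ}
    (hx : HasDerivAt x (B *ᵥ x t + g) t) (hy : HasDerivAt y (-(Bᵀ *ᵥ y t)) t) :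
    HasDerivAt (fun s => y s ⬝ᵥ x s) (y t ⬝ᵥ g) t := by
  convert hy.dotProduct hx using 1
  rw [neg_dotProduct, mulVec_transpose, dotProduct_add, dotProduct_mulVec]
  abel

variable {A : ℝ → Matrix ι ι ℝ} {x y : ℝ → ι → ℝ}

theorem integral_dotProduct_eq_sub {f : ℝ → ι → ℝ} (hf : Continuous f)
    (hx : IsIntegralCurve x fun t ξ => A t *ᵥ ξ + f t)
    (hy : IsIntegralCurve y fun t η => -((A t)ᵀ *ᵥ η)) (a b : ℝ) :
    ∫ t in a..b, y t ⬝ᵥ f t = y b ⬝ᵥ x b - y a ⬝ᵥ x a :=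
  integral_eq_sub_of_hasDerivAt (fun t _ => hasDerivAt_dotProduct_of_adjoint (hx t) (hy t))
    ((hy.continuous.dotProduct hf).intervalIntegrable a b)

theorem dotProduct_eq_of_adjoint (hx : IsIntegralCurve x fun t ξ => A t *ᵥ ξ)
    (hy : IsIntegralCurve y fun t η => -((A t)ᵀ *ᵥ η)) (a b : ℝ) :
    y b ⬝ᵥ x b = y a ⬝ᵥ x a := by
  have hx' : IsIntegralCurve x fun t ξ => A t *ᵥ ξ + (0 : ℝ → ι → ℝ) t := by simpa using hx
  simpa [sub_eq_zero, eq_comm] using integral_dotProduct_eq_sub continuous_const hx' hy a b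

theorem mem_range_of_forall_dotProduct_eq_zero {K V : Type*} [Field K] [AddCommGroup V]
    [Module K V] (M : V →ₗ[K] ι → K) {b : ι → K}
    (h : ∀ η : ι → K, (∀ ξ, η ⬝ᵥ M ξ = 0) → η ⬝ᵥ b = 0) : b ∈ LinearMap.range M := by
  classical
  by_contra hb
  obtain ⟨l, hlb, hlM⟩ := Submodule.exists_dual_map_eq_bot_of_notMem hb inferInstance
  obtain ⟨η, rfl⟩ := (dotProductEquiv K ι).surjective l
  refine hlb (h η fun ξ => ?_)
  exact (Submodule.mem_bot K).1 (hlM ▸ Submodule.mem_map_of_mem (LinearMap.mem_range_self M ξ))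

theorem exists_periodic_adjoint_of_forall_dotProduct_sub_eq_zero (hA : Continuous A)
    {T : ℝ} (hAT : Periodic A T) {Φ : (ι → ℝ) →ₗ[ℝ] ℝ → ι → ℝ}
    (hΦ : ∀ ξ, Φ ξ 0 = ξ ∧ IsIntegralCurve (Φ ξ) fun t ξ => A t *ᵥ ξ) {η : ι → ℝ}
    (hη : ∀ ξ, η ⬝ᵥ (ξ - Φ ξ T) = 0) :
    ∃ y, IsIntegralCurve y (fun t η => -((A t)ᵀ *ᵥ η)) ∧ Periodic y T ∧ y 0 = η := by
  have hlip : UniformlyLipschitzOnIcc fun t η => -((A t)ᵀ *ᵥ η) := by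
    simpa [neg_mulVec] using uniformlyLipschitzOnIcc_mulVec hA.matrix_transpose.neg
  obtain ⟨y, hyT, hy⟩ := exists_isIntegralCurve (by fun_prop) hlip T η
  have hy₀ : y 0 = η := dotProduct_eq _ _ fun ξ => calc
    y 0 ⬝ᵥ ξ = y T ⬝ᵥ Φ ξ T := by rw [dotProduct_eq_of_adjoint (hΦ ξ).2 hy 0 T, (hΦ ξ).1]
    _ = η ⬝ᵥ ξ := by rw [hyT, eq_comm, ← sub_eq_zero, ← dotProduct_sub, hη]
  exact ⟨y, hy, hy.periodic hlip (fun t => by simp [hAT t]) (hyT.trans hy₀.symm), hy₀⟩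

end Matrix

theorem fredholm_alternative_periodic_general
    (n : ℕ) (T : ℝ)
    (A : ℝ → Matrix (Fin n) (Fin n) ℝ)
    (hA : Continuous A) (hAper : ∀ t, A (t + T) = A t)
    (f : ℝ → Fin n → ℝ)
    (hf : Continuous f) (hfper : ∀ t, f (t + T) = f t) :
    (∃ x : ℝ → Fin n → ℝ, ContDiff ℝ 1 x ∧ (∀ t, x (t + T) = x t) ∧
        ∀ t, deriv x t = (A t).mulVec (x t) + f t) ↔
      (∀ y : ℝ → Fin n → ℝ, ContDiff ℝ 1 y → (∀ t, y (t + T) = y t) →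
        (∀ t, deriv y t = -((A t)ᵀ.mulVec (y t))) →
        ∫ t in (0 : ℝ)..T, y t ⬝ᵥ f t = 0) := by
  have hlipA : UniformlyLipschitzOnIcc fun t ξ => A t *ᵥ ξ := uniformlyLipschitzOnIcc_mulVec hA
  have hlip := hlipA.add_const f
  constructor
  · rintro ⟨x, hx, hxT, hx'⟩ y hy hyT hy'
    rw [integral_dotProduct_eq_sub hf
      (isIntegralCurve_of_deriv_eq (hx.differentiable one_ne_zero) hx')
      (isIntegralCurve_of_deriv_eq (hy.differentiable one_ne_zero) hy'),
      Periodic.eq hxT, Periodic.eq hyT, sub_self]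
  · intro H
    obtain ⟨Φ, hΦ⟩ := exists_linearMap_isIntegralCurve (fun t => (A t).mulVecLin)
      (show Continuous (uncurry fun t ξ => A t *ᵥ ξ) by fun_prop) hlipA 0
    obtain ⟨z, hz₀, hz⟩ := exists_isIntegralCurve (by fun_prop) hlip 0 0
    obtain ⟨ξ, hξ⟩ : z T ∈ LinearMap.range (LinearMap.id - LinearMap.proj T ∘ₗ Φ) := by
      refine mem_range_of_forall_dotProduct_eq_zero _ fun η hη => ?_
      obtain ⟨y, hy, hyT, hy₀⟩ :=
        exists_periodic_adjoint_of_forall_dotProduct_sub_eq_zero hA hAper hΦ (by simpa using hη)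
      have hyf := integral_dotProduct_eq_sub hf hz hy 0 T
      rw [H y (hy.contDiff_one (by fun_prop)) hyT fun t => (hy t).deriv, Periodic.eq hyT, hy₀,
        hz₀, dotProduct_zero, sub_zero] at hyf
      exact hyf.symm
    have hx : IsIntegralCurve (Φ ξ + z) fun t ξ => A t *ᵥ ξ + f t := fun t => by
      simpa [mulVec_add, add_assoc] using ((hΦ ξ).2 t).add (hz t)
    have hxT : (Φ ξ + z) T = (Φ ξ + z) 0 := by
      rw [Pi.add_apply, Pi.add_apply, (hΦ ξ).1, hz₀, add_zero, add_comm]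
      simpa [eq_sub_iff_add_eq] using hξ.symm
    exact ⟨Φ ξ + z, hx.contDiff_one (by fun_prop),
      hx.periodic hlip (fun t => by simp [hAper t, hfper t]) hxT, fun t => (hx t).deriv⟩

/-- **Fredholm's alternative for periodic linear systems.**
For continuous `T`-periodic `A : ℝ → Mₙ(ℝ)` and `f : ℝ → ℝⁿ`, the equation
`ẋ = A(t)x + f(t)` has a `T`-periodic `C¹` solution if and only if
`∫₀ᵀ ⟨y(t), f(t)⟩ dt = 0` for every `T`-periodic `C¹` solution `y` of the adjoint
equation `ẏ = -A(t)ᵀ y`. -/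
theorem fredholm_alternative_periodic
    (n : ℕ) (T : ℝ) (hT : 0 < T)
    (A : ℝ → Matrix (Fin n) (Fin n) ℝ)
    (hA : Continuous A) (hAper : ∀ t, A (t + T) = A t)
    (f : ℝ → Fin n → ℝ)
    (hf : Continuous f) (hfper : ∀ t, f (t + T) = f t) :
    (∃ x : ℝ → Fin n → ℝ, ContDiff ℝ 1 x ∧ (∀ t, x (t + T) = x t) ∧
        ∀ t, deriv x t = (A t).mulVec (x t) + f t) ↔
      (∀ y : ℝ → Fin n → ℝ, ContDiff ℝ 1 y → (∀ t, y (t + T) = y t) →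
        (∀ t, deriv y t = -((A t)ᵀ.mulVec (y t))) →
        ∫ t in (0 : ℝ)..T, y t ⬝ᵥ f t = 0) :=
  fredholm_alternative_periodic_general n T A hA hAper f hf hfper
end
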